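/- arXiv:1203.6346 — 2 statements merged into one kernel-verified Lean document; each statement's English description precedes it below -/
import Mathlib

section
/- Suppose that in a realization of the segregation process, F is an x-firewall incubator in the initial configuration, and there exist a left-pseudo-transcript and a right-pseudo-transcript of F all of whose partial sums are non-negative. Then F becomes an x-firewall: there is a time at which every node of F carries the label x, and from that time on all nodes of F keep the label x. -/
open MeasureTheory ProbabilityTheory
open scoped ENNReal NNReal

namespace Schelling

/-- Labels: `true` = type `x`, `false` = type `o`.
A configuration on the ring of `n` nodes assigns a label to each node. -/
abbrev Config (n : ℕ) := ZMod n → Bool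

/-- The ±1 value of a label: `x ↦ +1`, `o ↦ -1`. -/
def xval (b : Bool) : ℤ := if b then 1 else -1

/-- A node `i` is happy (tolerance τ = 1/2) if at least `w` of its `2w` nearest
neighbours `i ± 1, …, i ± w` carry the same label as `i`. -/
def happy (w : ℕ) {n : ℕ} (c : Config n) (i : ZMod n) : Prop :=
  w ≤ ∑ k ∈ Finset.Icc 1 w,
      ((if c (i + (k : ZMod n)) = c i then 1 else 0) +
       (if c (i - (k : ZMod n)) = c i then 1 else 0))

instance (w : ℕ) {n : ℕ} (c : Config n) (i : ZMod n) : Decidable (happy w c i) :=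
  Nat.decLe _ _

/-- The result of exchanging the labels of nodes `i` and `j`. -/
def doSwap {n : ℕ} (c : Config n) (i j : ZMod n) : Config n :=
  Function.update (Function.update c i (c j)) j (c i)

/-- One step of the dynamics: the proposed pair `p` swaps labels iff both nodes are
unhappy and carry opposite labels. -/
def swapStep (w : ℕ) {n : ℕ} (c : Config n) (p : ZMod n × ZMod n) : Config n :=
  if ¬ happy w c p.1 ∧ ¬ happy w c p.2 ∧ c p.1 ≠ c p.2 then doSwap c p.1 p.2 else c

/-- The trajectory of the segregation process started from `c0`, where `pr t` is the
pair of nodes proposed for a swap at time `t`. -/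
def traj (w : ℕ) {n : ℕ} (c0 : Config n) (pr : ℕ → ZMod n × ZMod n) : ℕ → Config n
  | 0 => c0
  | t + 1 => swapStep w (traj w c0 pr t) (pr t)

/-- A configuration is frozen if it contains no pair of unhappy, oppositely labeled
nodes, so that no further swaps are possible. -/
def Frozen (w : ℕ) {n : ℕ} (c : Config n) : Prop :=
  ∀ i j : ZMod n, ¬(¬ happy w c i ∧ ¬ happy w c j ∧ c i ≠ c j)

/-- `c'` is obtained from `c` by one legal swap: two distinct unhappy, oppositely
labeled nodes exchange labels. -/
def LegalSwap (w : ℕ) {n : ℕ} (c c' : Config n) : Prop :=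
  ∃ i j : ZMod n, i ≠ j ∧ ¬ happy w c i ∧ ¬ happy w c j ∧ c i ≠ c j ∧ c' = doSwap c i j

/-- The block of `len` consecutive nodes starting at `s` is monochromatic. -/
def MonochromaticBlock {n : ℕ} (c : Config n) (s : ZMod n) (len : ℕ) : Prop :=
  ∀ k < len, c (s + (k : ZMod n)) = c s

/-- A firewall is a monochromatic block of at least `w + 1` consecutive nodes. -/
def HasFirewall (w : ℕ) {n : ℕ} (c : Config n) : Prop :=
  ∃ (s : ZMod n) (len : ℕ), w + 1 ≤ len ∧ MonochromaticBlock c s len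

/-- Node `i` belongs to some firewall of `c`. -/
def InFirewall (w : ℕ) {n : ℕ} (c : Config n) (i : ZMod n) : Prop :=
  ∃ (s : ZMod n) (len : ℕ), w + 1 ≤ len ∧ MonochromaticBlock c s len ∧
    ∃ k < len, i = s + (k : ZMod n)

instance (n : ℕ) : MeasurableSpace (ZMod n) := ⊤

/-- The uniform probability measure on a finite set `s`. -/
noncomputable def uniformOn {α : Type*} [MeasurableSpace α] (s : Finset α) : Measure α :=
  (s.card : ℝ≥0∞)⁻¹ • ∑ a ∈ s, Measure.dirac a

/-- Unordered proposals are modeled as ordered pairs of distinct nodes. -/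
def distinctPairs (n : ℕ) [NeZero n] : Finset (ZMod n × ZMod n) :=
  Finset.univ.filter fun p => p.1 ≠ p.2

/-- The uniform distribution of the initial configuration. -/
noncomputable def configMeasure (n : ℕ) [NeZero n] : Measure (Config n) :=
  uniformOn (Finset.univ : Finset (Config n))

/-- The uniform distribution of a proposed pair. -/
noncomputable def pairMeasure (n : ℕ) [NeZero n] : Measure (ZMod n × ZMod n) :=
  uniformOn (distinctPairs n)

/-- `(init, prop)` is a realization of the segregation process randomness: for every
finite horizon `T`, the initial configuration together with the first `T` proposals is
distributed as (uniform configuration) × (i.i.d. uniform distinct pairs). -/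
def IsSchellingProcess (n : ℕ) [NeZero n] {Ω : Type*} [MeasurableSpace Ω]
    (μ : Measure Ω) (init : Ω → Config n) (prop : ℕ → Ω → ZMod n × ZMod n) : Prop :=
  ∀ T : ℕ, Measure.map (fun ω => (init ω, fun t : Fin T => prop t ω)) μ
      = (configMeasure n).prod (Measure.pi fun _ : Fin T => pairMeasure n)

/-- The x-bias of node `i`: the sum of the ±1 values over the window `i - w, …, i + w`. -/
def bias (w : ℕ) {n : ℕ} (c : Config n) (i : ZMod n) : ℤ :=
  xval (c i) + ∑ k ∈ Finset.Icc 1 w,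
    (xval (c (i + (k : ZMod n))) + xval (c (i - (k : ZMod n))))

/-- An x-firewall incubator: a block `F` of `len` consecutive nodes starting at `s`,
made of a left defender (first `w+1` nodes), an internal block, and a right defender
(last `w+1` nodes), such that every node of `F` has x-bias `> √w`, the minimum bias on
the left defender is attained at its left endpoint, and the minimum bias on the right
defender is attained at its right endpoint. -/
def IsIncubator (w : ℕ) {n : ℕ} (c : Config n) (s : ZMod n) (len : ℕ) : Prop :=
  2 * (w + 1) ≤ len ∧
  (∀ k < len, Real.sqrt w < ((bias w c (s + (k : ZMod n)) : ℤ) : ℝ)) ∧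
  (∀ k < w + 1, bias w c s ≤ bias w c (s + (k : ZMod n))) ∧
  (∀ k < w + 1,
    bias w c (s + ((len - 1 : ℕ) : ZMod n)) ≤ bias w c (s + ((len - 1 - k : ℕ) : ZMod n)))

/-- The sum of the first `j` entries of a ±1 sequence. -/
def chiPrefix {m : ℕ} (B : Fin m → Bool) (j : ℕ) : ℤ :=
  ∑ i : Fin m, if (i : ℕ) < j then xval (B i) else 0

/-- The total sum of a ±1 sequence. -/
def chi {m : ℕ} (B : Fin m → Bool) : ℤ := ∑ i : Fin m, xval (B i)

/-- The sum of the last `j` entries of a ±1 sequence. -/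
def chiSuffix {m : ℕ} (B : Fin m → Bool) (j : ℕ) : ℤ :=
  ∑ i : Fin m, if m - j ≤ (i : ℕ) then xval (B i) else 0

/-- A sequence `B ∈ {±1}^w` is x-promoting if `χ(B) ≥ 5√w` and for all `1 ≤ j ≤ w`,
`χ_j(B) > -2√w` and `χ_{-j}(B) > -2√w`. -/
def XPromoting (w : ℕ) (B : Fin w → Bool) : Prop :=
  5 * Real.sqrt w ≤ ((chi B : ℤ) : ℝ) ∧
  ∀ j : ℕ, 1 ≤ j → j ≤ w →
    (-2) * Real.sqrt w < ((chiPrefix B j : ℤ) : ℝ) ∧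
    (-2) * Real.sqrt w < ((chiSuffix B j : ℤ) : ℝ)

/-- The concatenation of the three length-`w` sequences `B, B', B''`, as a function on
positions `0, …, 3w - 1`. -/
def concat3 (w : ℕ) (B B' B'' : Fin w → Bool) (i : ℕ) : Bool :=
  if h : i < w then B ⟨i, h⟩
  else if h' : i < 2 * w then B' ⟨i - w, by omega⟩
  else if h'' : i < 3 * w then B'' ⟨i - 2 * w, by omega⟩
  else false

/-- The sign sequences of length `a + b` containing exactly `a` entries `+1`
(i.e. `true`) and `b` entries `-1` (i.e. `false`). -/
def ballotSeqs (a b : ℕ) : Finset (Fin (a + b) → Bool) :=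
  Finset.univ.filter fun f => (Finset.univ.filter fun i => f i = true).card = a

/-- Node `i` is, at time `t`, selected to participate in a proposed swap together with
an unhappy, oppositely labeled node. -/
def selectedWith (w : ℕ) {n : ℕ} (c0 : Config n) (pr : ℕ → ZMod n × ZMod n)
    (i : ZMod n) (t : ℕ) : Prop :=
  ((pr t).1 = i ∧ ¬ happy w (traj w c0 pr t) (pr t).2 ∧
      traj w c0 pr t (pr t).2 ≠ traj w c0 pr t i) ∨
  ((pr t).2 = i ∧ ¬ happy w (traj w c0 pr t) (pr t).1 ∧
      traj w c0 pr t (pr t).1 ≠ traj w c0 pr t i)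

/-- The satisfaction time of node `i`: the first time at which `i` is selected in a
proposed swap together with an unhappy, oppositely labeled node (`∞` if never). -/
noncomputable def satTime (w : ℕ) {n : ℕ} (c0 : Config n) (pr : ℕ → ZMod n × ZMod n)
    (i : ZMod n) : ℕ∞ :=
  sInf {t : ℕ∞ | ∃ t' : ℕ, t = (t' : ℕ∞) ∧ selectedWith w c0 pr i t'}

/-- Node `i` is impatient at time `t` if it is unhappy at time `t` and `t ≤ t*_i`. -/
def Impatient (w : ℕ) {n : ℕ} (c0 : Config n) (pr : ℕ → ZMod n × ZMod n)
    (i : ZMod n) (t : ℕ) : Prop :=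
  ¬ happy w (traj w c0 pr t) i ∧ (t : ℕ∞) ≤ satTime w c0 pr i

/-- The left combatants of the block starting at `s`: the nodes of the left attacker
`A_L = {s - w, …, s - 1}` initially labeled `x`, together with the nodes of the left
defender `D_L = {s, …, s + w}` initially labeled `o`. -/
def leftCombatants (w : ℕ) {n : ℕ} [NeZero n] (c0 : Config n) (s : ZMod n) :
    Finset (ZMod n) :=
  ((Finset.Icc 1 w).image fun k : ℕ => s - (k : ZMod n)).filter (fun i => c0 i = true) ∪
  ((Finset.range (w + 1)).image fun k : ℕ => s + (k : ZMod n)).filter (fun i => c0 i = false)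

/-- The right combatants of the block of length `len` starting at `s`: the nodes of the
right attacker `A_R = {s + len, …, s + len + w - 1}` initially labeled `x`, together
with the nodes of the right defender `D_R = {s + len - 1 - w, …, s + len - 1}` initially
labeled `o`. -/
def rightCombatants (w : ℕ) {n : ℕ} [NeZero n] (c0 : Config n) (s : ZMod n) (len : ℕ) :
    Finset (ZMod n) :=
  ((Finset.range w).image fun k : ℕ => s + ((len + k : ℕ) : ZMod n)).filter
      (fun i => c0 i = true) ∪
  ((Finset.range (w + 1)).image fun k : ℕ => s + ((len - 1 - k : ℕ) : ZMod n)).filter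
      (fun i => c0 i = false)

/-- `l` is a pseudo-transcript of the combatant set `C` relative to time `t0`: it
enumerates `C` without repetitions, all combatants with satisfaction time `> t0` come
first (in an arbitrary order, corresponding to an arbitrary permutation of their
signs), and the remaining combatants are listed in decreasing order of satisfaction
time. -/
def IsPseudoTranscript (w : ℕ) {n : ℕ} (c0 : Config n) (pr : ℕ → ZMod n × ZMod n)
    (t0 : ℕ) (C : Finset (ZMod n)) (l : List (ZMod n)) : Prop :=
  l.Nodup ∧ l.toFinset = C ∧
  ∀ p q : Fin l.length, (p : ℕ) < (q : ℕ) →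
    ((t0 : ℕ∞) < satTime w c0 pr (l.get q) → (t0 : ℕ∞) < satTime w c0 pr (l.get p)) ∧
    (satTime w c0 pr (l.get q) ≤ (t0 : ℕ∞) → satTime w c0 pr (l.get p) ≤ (t0 : ℕ∞) →
      satTime w c0 pr (l.get q) ≤ satTime w c0 pr (l.get p))

/-- All partial sums of the sign sequence associated to the list `l` (where each node
contributes the ±1 value of its initial label) are nonnegative. -/
def NonnegPartialSums {n : ℕ} (c0 : Config n) (l : List (ZMod n)) : Prop :=
  ∀ m ≤ l.length, 0 ≤ ((l.take m).map fun i => xval (c0 i)).sum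

/-- Nodes `i` and `j` belong to the same monochromatic run of `c`. -/
def sameRun {n : ℕ} (c : Config n) (i j : ZMod n) : Prop :=
  ∃ k : ℕ, ((j = i + (k : ZMod n)) ∧ ∀ m ≤ k, c (i + (m : ZMod n)) = c i) ∨
           ((j = i - (k : ZMod n)) ∧ ∀ m ≤ k, c (i - (m : ZMod n)) = c i)

/-- The length of the monochromatic run of `c` containing node `i`. -/
noncomputable def runLength {n : ℕ} (c : Config n) (i : ZMod n) : ℕ :=
  Nat.card {j : ZMod n // sameRun c i j}

/-- The number of unhappy nodes with label `b`. -/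
noncomputable def unhappyCount (w : ℕ) {n : ℕ} (c : Config n) (b : Bool) : ℕ :=
  Nat.card {i : ZMod n // c i = b ∧ ¬ happy w c i}

/-- The number of impatient nodes at time `t`. -/
noncomputable def impatientCount (w : ℕ) {n : ℕ} (c0 : Config n)
    (pr : ℕ → ZMod n × ZMod n) (t : ℕ) : ℕ :=
  Nat.card {i : ZMod n // Impatient w c0 pr i t}

/-- The absolute difference between the numbers of unhappy `x`'s and unhappy `o`'s. -/
noncomputable def unhappyImbalance (w : ℕ) {n : ℕ} (c : Config n) : ℝ :=
  |(unhappyCount w c true : ℝ) - (unhappyCount w c false : ℝ)|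

/-- The earliest time at which fewer than `bound` nodes are impatient (`∞` if never). -/
noncomputable def firstFewImpatient (w : ℕ) {n : ℕ} (c0 : Config n)
    (pr : ℕ → ZMod n × ZMod n) (bound : ℝ) : ℕ∞ :=
  sInf {t : ℕ∞ | ∃ t' : ℕ, t = (t' : ℕ∞) ∧ (impatientCount w c0 pr t' : ℝ) < bound}

/-- The earliest time at which the numbers of unhappy `x`'s and unhappy `o`'s differ by
more than `bound` (`∞` if never). -/
noncomputable def firstImbalance (w : ℕ) {n : ℕ} (c0 : Config n)
    (pr : ℕ → ZMod n × ZMod n) (bound : ℝ) : ℕ∞ :=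
  sInf {t : ℕ∞ | ∃ t' : ℕ, t = (t' : ℕ∞) ∧ bound < unhappyImbalance w (traj w c0 pr t')}

/-- In the disjoint-cycles graph `G` (cycles of length `L`), the node reached from `i`
by moving `k` steps forward inside `i`'s cycle. -/
def gnbr (L : ℕ) {n : ℕ} (i : ZMod n) (k : ℕ) : ZMod n :=
  (((i.val / L) * L + ((i.val % L + k) % L) : ℕ) : ZMod n)

/-- Happiness with respect to the disjoint-cycles graph `G`. -/
def ghappy (w L : ℕ) {n : ℕ} (c : Config n) (i : ZMod n) : Prop :=
  w ≤ ∑ k ∈ Finset.Icc 1 w,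
      ((if c (gnbr L i k) = c i then 1 else 0) +
       (if c (gnbr L i (L - k)) = c i then 1 else 0))

instance (w L : ℕ) {n : ℕ} (c : Config n) (i : ZMod n) : Decidable (ghappy w L c i) :=
  Nat.decLe _ _

/-- One step of the segregation dynamics on the disjoint-cycles graph `G`. -/
def gswapStep (w L : ℕ) {n : ℕ} (c : Config n) (p : ZMod n × ZMod n) : Config n :=
  if ¬ ghappy w L c p.1 ∧ ¬ ghappy w L c p.2 ∧ c p.1 ≠ c p.2 then doSwap c p.1 p.2 else c

/-- The trajectory of the process on `G`, coupled with the ring process by using the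
same initial configuration and the same proposed pairs. -/
def gtraj (w L : ℕ) {n : ℕ} (c0 : Config n) (pr : ℕ → ZMod n × ZMod n) : ℕ → Config n
  | 0 => c0
  | t + 1 => gswapStep w L (gtraj w L c0 pr t) (pr t)

/-- The set of nodes within `w` steps of `i` in either graph (including `i`). -/
def nbhd (w L : ℕ) {n : ℕ} (i : ZMod n) : Set (ZMod n) :=
  {j | ∃ k ≤ w, j = i + (k : ZMod n) ∨ j = i - (k : ZMod n) ∨
        j = gnbr L i k ∨ j = gnbr L i (L - k)}

open Classical in
/-- The tainted set `D(t)`: initially the nodes whose residue mod `L` lies in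
`{-w+1, …, w-1}`; whenever a proposed pair touches a tainted node, all nodes within `w`
steps (in either graph) of either member of the pair become tainted. -/
noncomputable def tainted (w L : ℕ) {n : ℕ} (pr : ℕ → ZMod n × ZMod n) :
    ℕ → Set (ZMod n)
  | 0 => {i | i.val % L < w ∨ L - w < i.val % L}
  | t + 1 =>
      if (pr t).1 ∈ tainted w L pr t ∨ (pr t).2 ∈ tainted w L pr t then
        tainted w L pr t ∪ nbhd w L (pr t).1 ∪ nbhd w L (pr t).2
      else tainted w L pr t

end Schelling

/-!
Up to time `t0` every node of `F` keeps a positive x-bias. While this holds, the x's of `F` are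
happy and never move, and an o of `F` is unhappy, so the first swap proposed to it together with
an unhappy x turns it into an x for good. Hence, in the window of a node of `F`, the bias can only
drop through attacking x's that have been satisfied (−2 each), while every satisfied defending o
adds 2. For a node of `D_L` the initial bias is at least that of the left endpoint of `F`, which is
`2 (#attacking x − #defending o) + 1`; the still unsatisfied combatants form a prefix of the
pseudo-transcript, whose nonnegative sum says that no more defending o's than attacking x's are
unsatisfied, so the bias stays at least 1. The same holds on `D_R`, and on the interior block the
window lies inside `F`. At time `t0` no node of `F` is impatient, so an o of `F` would already have
been satisfied: all of `F` is x. A monochromatic block of at least `w + 1` nodes is happy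
everywhere, so it never changes again.
-/

open Finset

theorem ZMod.intCast_injOn_Ico (n : ℕ) (a : ℤ) :
    Set.InjOn (Int.cast : ℤ → ZMod n) (Set.Ico a (a + n)) := by
  rintro x ⟨hx, hx'⟩ y ⟨hy, hy'⟩ hxy
  rw [ZMod.intCast_eq_intCast_iff_dvd_sub] at hxy
  have := Int.eq_zero_of_abs_lt_dvd hxy (abs_lt.2 ⟨by linarith, by linarith⟩)
  linarith

theorem Int.sum_Icc_neg_eq {M : Type*} [AddCommMonoid M] (f : ℤ → M) (w : ℕ) :
    ∑ j ∈ Icc (-(w : ℤ)) w, f j = f 0 + ∑ k ∈ Icc 1 w, (f k + f (-k)) := by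
  induction w with
  | zero => simp
  | succ w ih =>
    have hIcc : Icc (-((w + 1 : ℕ) : ℤ)) (w + 1 : ℕ)
        = insert ((w : ℤ) + 1) (insert (-((w : ℤ) + 1)) (Icc (-(w : ℤ)) w)) := by
      ext j
      simp only [mem_Icc, mem_insert]
      push_cast
      omega
    rw [hIcc, sum_insert (by simp; omega), sum_insert (by simp), ih,
      sum_Icc_succ_top (by omega)]
    push_cast
    abel

theorem List.exists_filter_eq_take {α : Type*} {p : α → Bool} :
    ∀ {l : List α}, l.Pairwise (fun a b => p b → p a) →
      ∃ m ≤ l.length, l.filter p = l.take m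
  | [], _ => ⟨0, le_rfl, rfl⟩
  | a :: l, h => by
    rw [List.pairwise_cons] at h
    by_cases ha : p a
    · obtain ⟨m, hm, hl⟩ := List.exists_filter_eq_take h.2
      exact ⟨m + 1, by simpa using hm,
        by rw [List.filter_cons_of_pos ha, hl, List.take_succ_cons]⟩
    · refine ⟨0, Nat.zero_le _, ?_⟩
      rw [List.filter_cons_of_neg ha, List.take_zero, List.filter_eq_nil_iff]
      exact fun b hb hpb => ha (h.1 b hb hpb)

namespace Schelling

section Happiness

variable {w n : ℕ}

theorem xval_mul_xval (b b' : Bool) :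
    xval b * xval b' = 2 * (if b' = b then 1 else 0) - 1 := by
  cases b <;> cases b' <;> decide

theorem happy_iff_xval_mul_bias_pos (c : Config n) (i : ZMod n) :
    happy w c i ↔ 0 < xval (c i) * bias w c i := by
  have hi : xval (c i) * xval (c i) = 1 := by cases c i <;> rfl
  have hterm : ∀ k ∈ Icc 1 w,
      xval (c i) * (xval (c (i + (k : ZMod n))) + xval (c (i - (k : ZMod n))))
        = 2 * (((if c (i + (k : ZMod n)) = c i then 1 else 0) +
          (if c (i - (k : ZMod n)) = c i then 1 else 0) : ℕ) : ℤ) - 2 := fun k _ => by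
    rw [mul_add, xval_mul_xval, xval_mul_xval]
    push_cast
    ring
  rw [happy, bias, mul_add, hi, mul_sum, sum_congr rfl hterm, sum_sub_distrib, ← mul_sum,
    ← Nat.cast_sum, sum_const, Nat.card_Icc, add_tsub_cancel_right, nsmul_eq_mul]
  omega

theorem happy_of_bias_pos {c : Config n} {i : ZMod n} (hi : c i = true)
    (hb : 0 < bias w c i) : happy w c i := by
  rwa [happy_iff_xval_mul_bias_pos, hi, xval, if_pos rfl, one_mul]

theorem not_happy_of_bias_pos {c : Config n} {i : ZMod n} (hi : c i = false)
    (hb : 0 < bias w c i) : ¬ happy w c i := by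
  rw [happy_iff_xval_mul_bias_pos, hi, xval, if_neg Bool.false_ne_true]
  omega

theorem happy_of_forall_eq {L : ℕ} {c : Config n} {s : ZMod n} {b : Bool} (hL : w + 1 ≤ L)
    (hc : ∀ k < L, c (s + k) = b) {k : ℕ} (hk : k < L) : happy w c (s + k) := by
  have hright : ∀ j : ℕ, k + j < L → c (s + k + j) = c (s + k) := fun j hj => by
    rw [hc k hk, add_assoc, ← Nat.cast_add, hc _ hj]
  have hleft : ∀ j ≤ k, c (s + k - j) = c (s + k) := fun j hj => by
    rw [hc k hk, add_sub_assoc, ← Nat.cast_sub hj, hc _ (by omega)]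
  have hcard : w ≤ #{j ∈ Icc 1 w | k + j < L} + #{j ∈ Icc 1 w | j ≤ k} := by
    have h1 := card_le_card (s := Icc 1 (min w (L - 1 - k))) (t := {j ∈ Icc 1 w | k + j < L})
      fun j hj => by simp only [mem_Icc, mem_filter] at hj ⊢; omega
    have h2 := card_le_card (s := Icc 1 (min w k)) (t := {j ∈ Icc 1 w | j ≤ k})
      fun j hj => by simp only [mem_Icc, mem_filter] at hj ⊢; omega
    simp only [Nat.card_Icc] at h1 h2
    omega
  rw [card_filter, card_filter, ← sum_add_distrib] at hcard
  refine hcard.trans (sum_le_sum fun j _ => add_le_add ?_ ?_)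
  · by_cases h : k + j < L <;> simp [h, hright]
  · by_cases h : j ≤ k <;> simp [h, hleft]

theorem sum_xval (c : Config n) (S : Finset (ZMod n)) :
    ∑ q ∈ S, xval (c q) = #{q ∈ S | c q = true} - #{q ∈ S | c q = false} := by
  rw [card_filter, card_filter]
  push_cast
  rw [← sum_sub_distrib]
  exact sum_congr rfl fun q _ => by cases c q <;> rfl

theorem card_filter_true_add_card_filter_false (c : Config n) (S : Finset (ZMod n)) :
    #{q ∈ S | c q = true} + #{q ∈ S | c q = false} = #S := by
  simpa only [Bool.not_eq_true] using card_filter_add_card_filter_not (s := S) (p := (c · = true))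

end Happiness

section Windows

variable {w n : ℕ}

noncomputable def window (w : ℕ) (p : ZMod n) : Finset (ZMod n) :=
  (Icc (-(w : ℤ)) w).image fun j : ℤ => p + (j : ZMod n)

theorem bias_eq_sum_window (hn : 2 * w < n) (c : Config n) (p : ZMod n) :
    bias w c p = ∑ q ∈ window w p, xval (c q) := by
  have hinj : Set.InjOn (fun j : ℤ => p + (j : ZMod n)) (Icc (-(w : ℤ)) w) :=
    fun x hx y hy hxy => ZMod.intCast_injOn_Ico n (-w)
      (by simp only [coe_Icc, Set.mem_Icc] at hx; constructor <;> omega)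
      (by simp only [coe_Icc, Set.mem_Icc] at hy; constructor <;> omega) (add_left_cancel hxy)
  rw [window, sum_image hinj, Int.sum_Icc_neg_eq, bias]
  simp [sub_eq_add_neg]

/-- With `a` the left (right) endpoint of `F` and `ε = 1` (`ε = -1`), the defender of that side
is `arc a ε (Icc 0 w)` and its attacker `arc a ε (Icc (-w) (-1))`. -/
noncomputable def arc (a ε : ZMod n) (I : Finset ℤ) : Finset (ZMod n) :=
  I.image fun j : ℤ => a + ε * (j : ZMod n)

theorem window_add_mul {ε : ZMod n} (hε : ε = 1 ∨ ε = -1) (a : ZMod n) (m : ℤ) :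
    window w (a + ε * (m : ZMod n)) = arc a ε (Icc (m - w) (m + w)) := by
  ext q
  simp only [window, arc, mem_image, mem_Icc]
  rcases hε with rfl | rfl
  · constructor
    · rintro ⟨j, hj, rfl⟩
      exact ⟨m + j, by omega, by push_cast; ring⟩
    · rintro ⟨j, hj, rfl⟩
      exact ⟨j - m, by omega, by push_cast; ring⟩
  · constructor <;>
    · rintro ⟨j, hj, rfl⟩
      exact ⟨m - j, by omega, by push_cast; ring⟩

theorem arc_injOn {ε : ZMod n} (hε : IsUnit ε) (a : ZMod n) (b : ℤ) :
    Set.InjOn (fun j : ℤ => a + ε * (j : ZMod n)) (Set.Ico b (b + n)) := fun _ hx _ hy hxy =>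
  ZMod.intCast_injOn_Ico n b hx hy (hε.mul_left_cancel (add_left_cancel hxy))

end Windows

section Dynamics

variable {w n : ℕ} {c0 : Config n} {pr : ℕ → ZMod n × ZMod n} {q : ZMod n} {t T : ℕ}

theorem traj_succ : traj w c0 pr (t + 1) = swapStep w (traj w c0 pr t) (pr t) := rfl

theorem traj_succ_apply_of_happy (h : happy w (traj w c0 pr t) q) :
    traj w c0 pr (t + 1) q = traj w c0 pr t q := by
  rw [traj_succ, swapStep]
  split_ifs with hswap
  · obtain ⟨h1, h2, -⟩ := hswap
    rw [doSwap, Function.update_of_ne (by rintro rfl; exact h2 h),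
      Function.update_of_ne (by rintro rfl; exact h1 h)]
  · rfl

theorem selectedWith_of_traj_succ_ne (h : traj w c0 pr (t + 1) q ≠ traj w c0 pr t q) :
    selectedWith w c0 pr q t := by
  rw [traj_succ, swapStep] at h
  split_ifs at h with hswap
  · obtain ⟨h1, h2, h12⟩ := hswap
    by_cases hq1 : (pr t).1 = q
    · subst hq1
      exact Or.inl ⟨rfl, h2, Ne.symm h12⟩
    by_cases hq2 : (pr t).2 = q
    · subst hq2
      exact Or.inr ⟨rfl, h1, h12⟩
    rw [doSwap, Function.update_of_ne (Ne.symm hq2), Function.update_of_ne (Ne.symm hq1)] at h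
    exact absurd rfl h
  · exact absurd rfl h

theorem traj_succ_apply_of_selectedWith (hsel : selectedWith w c0 pr q t)
    (hq : ¬ happy w (traj w c0 pr t) q) : traj w c0 pr (t + 1) q = !traj w c0 pr t q := by
  rw [traj_succ, swapStep]
  rcases hsel with ⟨rfl, h2, h12⟩ | ⟨rfl, h1, h12⟩
  · rw [if_pos ⟨hq, h2, Ne.symm h12⟩, doSwap,
      Function.update_of_ne fun e => h12 (congrArg _ e.symm), Function.update_self]
    exact Bool.eq_not_iff.2 h12
  · rw [if_pos ⟨h1, hq, h12⟩, doSwap, Function.update_self]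
    exact Bool.eq_not_iff.2 h12

theorem satTime_lt_iff : satTime w c0 pr q < T ↔ ∃ v < T, selectedWith w c0 pr q v := by
  simp only [satTime, sInf_lt_iff, Set.mem_ofPred_eq]
  constructor
  · rintro ⟨_, ⟨v, rfl, hv⟩, hvT⟩
    exact ⟨v, by exact_mod_cast hvT, hv⟩
  · rintro ⟨v, hvT, hv⟩
    exact ⟨v, ⟨v, rfl, hv⟩, by exact_mod_cast hvT⟩

theorem traj_apply_eq_of_le_satTime (h : (T : ℕ∞) ≤ satTime w c0 pr q) :
    traj w c0 pr T q = c0 q := by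
  induction T with
  | zero => rfl
  | succ T ih =>
    rw [← ih (le_trans (by exact_mod_cast T.le_succ) h)]
    by_contra hne
    exact not_lt.2 h (satTime_lt_iff.2 ⟨T, T.lt_succ_self, selectedWith_of_traj_succ_ne hne⟩)

theorem traj_apply_eq_true_of_bias_pos
    (hb : ∀ v, t ≤ v → v < T → 0 < bias w (traj w c0 pr v) q)
    (htT : t ≤ T) (ht : traj w c0 pr t q = true) : traj w c0 pr T q = true := by
  induction T, htT using Nat.le_induction with
  | base => exact ht
  | succ T hT ih =>
    have hT' := ih fun v h1 h2 => hb v h1 (by omega)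
    rw [traj_succ_apply_of_happy (happy_of_bias_pos hT' (hb T hT (by omega))), hT']

theorem traj_succ_apply_eq_true_of_selectedWith (hsel : selectedWith w c0 pr q t)
    (hb : 0 < bias w (traj w c0 pr t) q) : traj w c0 pr (t + 1) q = true := by
  cases h : traj w c0 pr t q
  · rw [traj_succ_apply_of_selectedWith hsel (not_happy_of_bias_pos h hb), h, Bool.not_false]
  · rw [traj_succ_apply_of_happy (happy_of_bias_pos h hb), h]

theorem traj_apply_eq_true_of_satTime_lt (hb : ∀ v < T, 0 < bias w (traj w c0 pr v) q)
    (hsel : satTime w c0 pr q < T) : traj w c0 pr T q = true := by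
  obtain ⟨v, hvT, hv⟩ := satTime_lt_iff.1 hsel
  exact traj_apply_eq_true_of_bias_pos (fun u _ hu => hb u hu) hvT
    (traj_succ_apply_eq_true_of_selectedWith hv (hb v hvT))

theorem traj_apply_eq_true_of_not_impatient (hb : ∀ v ≤ T, 0 < bias w (traj w c0 pr v) q)
    (hq : ¬ Impatient w c0 pr q T) : traj w c0 pr T q = true := by
  by_contra hx
  rw [Bool.not_eq_true] at hx
  have hsel : satTime w c0 pr q < T :=
    lt_of_not_ge fun hT => hq ⟨not_happy_of_bias_pos hx (hb T le_rfl), hT⟩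
  simpa [hx] using traj_apply_eq_true_of_satTime_lt (fun v hv => hb v hv.le) hsel

theorem traj_apply_eq_of_forall_eq {s : ZMod n} {L : ℕ} {b : Bool} (hL : w + 1 ≤ L)
    (h : ∀ k < L, traj w c0 pr t (s + k) = b) (htT : t ≤ T) :
    ∀ k < L, traj w c0 pr T (s + k) = b := by
  induction T, htT using Nat.le_induction with
  | base => exact h
  | succ T _ ih =>
    intro k hk
    rw [traj_succ_apply_of_happy (happy_of_forall_eq hL ih hk), ih k hk]

end Dynamics

section Transcripts

variable {w n : ℕ} {c0 : Config n} {pr : ℕ → ZMod n × ZMod n} {T t0 : ℕ}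
  {l : List (ZMod n)}

theorem IsPseudoTranscript.pairwise_le_satTime {C : Finset (ZMod n)}
    (hl : IsPseudoTranscript w c0 pr t0 C l) (hT : T ≤ t0) :
    l.Pairwise fun a b =>
      (T : ℕ∞) ≤ satTime w c0 pr b → (T : ℕ∞) ≤ satTime w c0 pr a := by
  rw [List.pairwise_iff_get]
  intro i j hij hj
  obtain ⟨h1, h2⟩ := hl.2.2 i j hij
  by_cases hi : (t0 : ℕ∞) < satTime w c0 pr (l.get i)
  · exact le_trans (by exact_mod_cast hT) hi.le
  · exact hj.trans (h2 (not_lt.1 fun h => hi (h1 h)) (not_lt.1 hi))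

theorem card_filter_le_of_isPseudoTranscript {A D : Finset (ZMod n)}
    (hA : ∀ q ∈ A, c0 q = true) (hD : ∀ q ∈ D, c0 q = false) (hT : T ≤ t0)
    (hl : IsPseudoTranscript w c0 pr t0 (A ∪ D) l) (hsum : NonnegPartialSums c0 l) :
    #{q ∈ D | (T : ℕ∞) ≤ satTime w c0 pr q}
      ≤ #{q ∈ A | (T : ℕ∞) ≤ satTime w c0 pr q} := by
  obtain ⟨m, hm, hprefix⟩ := List.exists_filter_eq_take
    (p := fun q => decide ((T : ℕ∞) ≤ satTime w c0 pr q))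
    (by simpa using hl.pairwise_le_satTime hT)
  have hAD : Disjoint A D :=
    disjoint_left.2 fun q hqA hqD => by simpa [hA q hqA] using hD q hqD
  have hnonneg := hsum m hm
  rw [← hprefix, ← List.sum_toFinset _ (hl.1.filter _), List.toFinset_filter, hl.2.1,
    filter_union, sum_union (disjoint_filter_filter hAD)] at hnonneg
  have hAsum : ∑ q ∈ A with (T : ℕ∞) ≤ satTime w c0 pr q, xval (c0 q)
      = #{q ∈ A | (T : ℕ∞) ≤ satTime w c0 pr q} := by
    rw [card_eq_sum_ones, Nat.cast_sum]
    exact sum_congr rfl fun q hq => by rw [hA q (mem_filter.1 hq).1]; rfl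
  have hDsum : ∑ q ∈ D with (T : ℕ∞) ≤ satTime w c0 pr q, xval (c0 q)
      = -#{q ∈ D | (T : ℕ∞) ≤ satTime w c0 pr q} := by
    rw [card_eq_sum_ones, Nat.cast_sum, ← sum_neg_distrib]
    exact sum_congr rfl fun q hq => by rw [hD q (mem_filter.1 hq).1]; rfl
  simp only [decide_eq_true_eq] at hnonneg
  omega

end Transcripts

section Invariant

open Classical

variable {w n : ℕ} {c0 : Config n} {pr : ℕ → ZMod n × ZMod n} {T t0 : ℕ} {F : Set (ZMod n)}

theorem le_bias_traj_add_card (hn : 2 * w < n)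
    (hinv : ∀ v < T, ∀ q ∈ F, 0 < bias w (traj w c0 pr v) q) (p : ZMod n) :
    bias w c0 p + 2 * #{q ∈ window w p | q ∈ F ∧ c0 q = false ∧ satTime w c0 pr q < T}
      ≤ bias w (traj w c0 pr T) p
        + 2 * #{q ∈ window w p | q ∉ F ∧ c0 q = true ∧ satTime w c0 pr q < T} := by
  have hpoint : ∀ q ∈ window w p,
      2 * (if q ∈ F ∧ c0 q = false ∧ satTime w c0 pr q < T then 1 else 0 : ℤ)
        - 2 * (if q ∉ F ∧ c0 q = true ∧ satTime w c0 pr q < T then 1 else 0 : ℤ)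
        ≤ xval (traj w c0 pr T q) - xval (c0 q) := by
    intro q _
    by_cases hsel : satTime w c0 pr q < T
    · by_cases hF : q ∈ F
      · rw [traj_apply_eq_true_of_satTime_lt (fun v hv => hinv v hv q hF) hsel]
        cases c0 q <;> simp [hF, hsel, xval]
      · cases c0 q <;> cases traj w c0 pr T q <;> simp [hF, hsel, xval]
    · rw [traj_apply_eq_of_le_satTime (not_lt.1 hsel)]
      simp [hsel]
  have hsum := sum_le_sum hpoint
  rw [sum_sub_distrib, sum_sub_distrib, ← mul_sum, ← mul_sum, sum_boole, sum_boole,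
    ← bias_eq_sum_window hn, ← bias_eq_sum_window hn] at hsum
  linarith

theorem bias_traj_pos_of_window_subset (hn : 2 * w < n)
    (hinv : ∀ v < T, ∀ q ∈ F, 0 < bias w (traj w c0 pr v) q) {p : ZMod n}
    (hp : ∀ q ∈ window w p, q ∈ F) (h0 : 0 < bias w c0 p) :
    0 < bias w (traj w c0 pr T) p := by
  have hcore := le_bias_traj_add_card hn hinv p
  have hnone : #{q ∈ window w p | q ∉ F ∧ c0 q = true ∧ satTime w c0 pr q < T} = 0 :=
    card_eq_zero.2 (filter_eq_empty_iff.2 fun q hq h => h.1 (hp q hq))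
  omega

theorem bias_traj_pos_of_defended (hn : 2 * w < n) {A D : Finset (ZMod n)} {a p : ZMod n}
    {l : List (ZMod n)} (hwin : window w a = A ∪ D) (hAD : Disjoint A D) (hcard : #A < #D)
    (hDp : D ⊆ window w p) (hDF : ∀ q ∈ D, q ∈ F)
    (hpF : ∀ q ∈ window w p, q ∉ F → q ∈ A)
    (hmin : bias w c0 a ≤ bias w c0 p)
    (hinv : ∀ v < T, ∀ q ∈ F, 0 < bias w (traj w c0 pr v) q) (hT : T ≤ t0)
    (hl : IsPseudoTranscript w c0 pr t0 ({q ∈ A | c0 q = true} ∪ {q ∈ D | c0 q = false}) l)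
    (hsum : NonnegPartialSums c0 l) :
    0 < bias w (traj w c0 pr T) p := by
  have hA := card_filter_true_add_card_filter_false c0 A
  have hD := card_filter_true_add_card_filter_false c0 D
  set Ax := {q ∈ A | c0 q = true}
  set Do := {q ∈ D | c0 q = false}
  have hcore := le_bias_traj_add_card hn hinv p
  have hcount := card_filter_le_of_isPseudoTranscript (A := Ax) (D := Do)
    (fun q hq => (mem_filter.1 hq).2) (fun q hq => (mem_filter.1 hq).2) hT hl hsum
  have hbias : bias w c0 a
      = #Ax - #{q ∈ A | c0 q = false} + (#{q ∈ D | c0 q = true} - #Do) := by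
    rw [bias_eq_sum_window hn, hwin, sum_union hAD, sum_xval, sum_xval]
  have hAx := card_filter_add_card_filter_not (s := Ax) (p := (satTime w c0 pr · < T))
  have hDo := card_filter_add_card_filter_not (s := Do) (p := (satTime w c0 pr · < T))
  simp only [not_lt] at hAx hDo
  have hattack : #{q ∈ window w p | q ∉ F ∧ c0 q = true ∧ satTime w c0 pr q < T}
      ≤ #{q ∈ Ax | satTime w c0 pr q < T} := card_le_card fun q hq => by
    simp only [Ax, mem_filter] at hq ⊢
    exact ⟨⟨hpF q hq.1 hq.2.1, hq.2.2.1⟩, hq.2.2.2⟩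
  have hdefend : #{q ∈ Do | satTime w c0 pr q < T}
      ≤ #{q ∈ window w p | q ∈ F ∧ c0 q = false ∧ satTime w c0 pr q < T} :=
    card_le_card fun q hq => by
      simp only [Do, mem_filter] at hq ⊢
      exact ⟨hDp hq.1.1, hDF q hq.1.1, hq.1.2, hq.2⟩
  omega

theorem bias_traj_pos_of_arc (hn : 2 * w < n) {a ε : ZMod n} (hε : ε = 1 ∨ ε = -1)
    (hF : ∀ q ∈ arc a ε (Icc 0 (2 * (w : ℤ))), q ∈ F)
    (hinv : ∀ v < T, ∀ q ∈ F, 0 < bias w (traj w c0 pr v) q) (hT : T ≤ t0)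
    {l : List (ZMod n)}
    (hl : IsPseudoTranscript w c0 pr t0 ({q ∈ arc a ε (Icc (-(w : ℤ)) (-1)) | c0 q = true} ∪
      {q ∈ arc a ε (Icc 0 (w : ℤ)) | c0 q = false}) l) (hsum : NonnegPartialSums c0 l)
    {m : ℤ} (hm : 0 ≤ m) (hmw : m ≤ w) (hmin : bias w c0 a ≤ bias w c0 (a + ε * m)) :
    0 < bias w (traj w c0 pr T) (a + ε * m) := by
  have hinj := arc_injOn (hε.elim (· ▸ isUnit_one) (· ▸ isUnit_one.neg)) a (-w)
  have hIco : ∀ j ∈ Icc (-(w : ℤ)) w, j ∈ Set.Ico (-(w : ℤ)) (-w + n) := fun j hj => by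
    simp only [mem_Icc] at hj
    constructor <;> omega
  refine bias_traj_pos_of_defended hn ?_ ?_ ?_ ?_ ?_ ?_ hmin hinv hT hl hsum
  · have hsplit : Icc (-(w : ℤ)) w = Icc (-(w : ℤ)) (-1) ∪ Icc 0 (w : ℤ) := by
      ext j
      simp only [mem_Icc, mem_union]
      omega
    simpa [arc, ← image_union, ← hsplit] using window_add_mul (w := w) hε a 0
  · refine disjoint_left.2 fun q hqA hqD => ?_
    obtain ⟨i, hi, rfl⟩ := mem_image.1 hqA
    obtain ⟨j, hj, hij⟩ := mem_image.1 hqD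
    simp only [mem_Icc] at hi hj
    have := hinj (hIco j (by simp; omega)) (hIco i (by simp; omega)) hij
    omega
  · refine card_image_le.trans_lt ?_
    rw [arc, card_image_of_injOn fun x hx y hy => hinj (hIco x (by simp at hx ⊢; omega))
      (hIco y (by simp at hy ⊢; omega))]
    simp
  · rw [window_add_mul hε]
    exact image_subset_image (Icc_subset_Icc (by omega) (by omega))
  · exact fun q hq => hF q (image_subset_image (Icc_subset_Icc le_rfl (by omega)) hq)
  · intro q hq hqF
    rw [window_add_mul hε] at hq
    obtain ⟨j, hj, rfl⟩ := mem_image.1 hq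
    simp only [mem_Icc] at hj
    by_cases hj0 : 0 ≤ j
    · exact absurd (hF _ (mem_image_of_mem _ (mem_Icc.2 ⟨hj0, by omega⟩))) hqF
    · exact mem_image_of_mem _ (mem_Icc.2 ⟨by omega, by omega⟩)

end Invariant

section Incubator

variable {w n : ℕ} {c0 : Config n} {pr : ℕ → ZMod n × ZMod n} {s : ZMod n} {len T t0 : ℕ}

def block (s : ZMod n) (len : ℕ) : Set (ZMod n) := {q | ∃ k < len, q = s + k}

theorem leftCombatants_eq_arc [NeZero n] :
    leftCombatants w c0 s = {q ∈ arc s 1 (Icc (-(w : ℤ)) (-1)) | c0 q = true} ∪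
      {q ∈ arc s 1 (Icc 0 (w : ℤ)) | c0 q = false} := by
  have hA : arc s 1 (Icc (-(w : ℤ)) (-1)) = (Icc 1 w).image fun k : ℕ => s - k := by
    ext q
    simp only [arc, mem_image, mem_Icc]
    constructor
    · rintro ⟨j, hj, rfl⟩
      obtain ⟨k, rfl⟩ := Int.exists_eq_neg_ofNat (by omega : j ≤ 0)
      exact ⟨k, by omega, by push_cast; ring⟩
    · rintro ⟨k, hk, rfl⟩
      exact ⟨-k, by omega, by push_cast; ring⟩
  have hD : arc s 1 (Icc 0 (w : ℤ)) = (range (w + 1)).image fun k : ℕ => s + k := by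
    ext q
    simp only [arc, mem_image, mem_Icc, mem_range]
    constructor
    · rintro ⟨j, hj, rfl⟩
      obtain ⟨k, rfl⟩ := Int.eq_ofNat_of_zero_le hj.1
      exact ⟨k, by omega, by push_cast; ring⟩
    · rintro ⟨k, hk, rfl⟩
      exact ⟨k, by omega, by push_cast; ring⟩
  rw [hA, hD, leftCombatants]

theorem rightCombatants_eq_arc [NeZero n] (hlen : w + 1 ≤ len) :
    rightCombatants w c0 s len =
      {q ∈ arc (s + ((len - 1 : ℕ) : ZMod n)) (-1) (Icc (-(w : ℤ)) (-1)) | c0 q = true} ∪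
      {q ∈ arc (s + ((len - 1 : ℕ) : ZMod n)) (-1) (Icc 0 (w : ℤ)) | c0 q = false} := by
  have hA : arc (s + ((len - 1 : ℕ) : ZMod n)) (-1) (Icc (-(w : ℤ)) (-1))
      = (range w).image fun k : ℕ => s + ((len + k : ℕ) : ZMod n) := by
    ext q
    simp only [arc, mem_image, mem_Icc, mem_range]
    constructor
    · rintro ⟨j, hj, rfl⟩
      obtain ⟨k, rfl⟩ := Int.exists_eq_neg_ofNat (by omega : j ≤ 0)
      refine ⟨k - 1, by omega, ?_⟩
      rw [show len + (k - 1) = (len - 1) + k by omega]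
      push_cast
      ring
    · rintro ⟨k, hk, rfl⟩
      refine ⟨-(k + 1), by omega, ?_⟩
      rw [show len + k = (len - 1) + (k + 1) by omega]
      push_cast
      ring
  have hD : arc (s + ((len - 1 : ℕ) : ZMod n)) (-1) (Icc 0 (w : ℤ))
      = (range (w + 1)).image fun k : ℕ => s + ((len - 1 - k : ℕ) : ZMod n) := by
    ext q
    simp only [arc, mem_image, mem_Icc, mem_range]
    constructor
    · rintro ⟨j, hj, rfl⟩
      obtain ⟨k, rfl⟩ := Int.eq_ofNat_of_zero_le hj.1
      refine ⟨k, by omega, ?_⟩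
      rw [Nat.cast_sub (by omega : k ≤ len - 1)]
      push_cast
      ring
    · rintro ⟨k, hk, rfl⟩
      refine ⟨k, by omega, ?_⟩
      rw [Nat.cast_sub (by omega : k ≤ len - 1)]
      push_cast
      ring
  rw [hA, hD, rightCombatants]

theorem bias_traj_pos_left [NeZero n] (hn : 2 * w < n) (hlen : 2 * w + 1 ≤ len)
    (hinv : ∀ v < T, ∀ q ∈ block s len, 0 < bias w (traj w c0 pr v) q) (hT : T ≤ t0)
    {l : List (ZMod n)} (hl : IsPseudoTranscript w c0 pr t0 (leftCombatants w c0 s) l)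
    (hsum : NonnegPartialSums c0 l) {k : ℕ} (hk : k ≤ w)
    (hmin : bias w c0 s ≤ bias w c0 (s + k)) :
    0 < bias w (traj w c0 pr T) (s + k) := by
  have hF : ∀ q ∈ arc s 1 (Icc 0 (2 * (w : ℤ))), q ∈ block s len := by
    intro q hq
    obtain ⟨j, hj, rfl⟩ := mem_image.1 hq
    obtain ⟨i, rfl⟩ := Int.eq_ofNat_of_zero_le (mem_Icc.1 hj).1
    exact ⟨i, by simp at hj; omega, by simp⟩
  rw [leftCombatants_eq_arc] at hl
  simpa using bias_traj_pos_of_arc hn (Or.inl rfl) hF hinv hT hl hsum (m := k)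
    (by omega) (by omega) (by simpa using hmin)

theorem bias_traj_pos_right [NeZero n] (hn : 2 * w < n) (hlen : 2 * w + 1 ≤ len)
    (hinv : ∀ v < T, ∀ q ∈ block s len, 0 < bias w (traj w c0 pr v) q) (hT : T ≤ t0)
    {l : List (ZMod n)} (hl : IsPseudoTranscript w c0 pr t0 (rightCombatants w c0 s len) l)
    (hsum : NonnegPartialSums c0 l) {k : ℕ} (hk : len ≤ k + w + 1) (hk' : k < len)
    (hmin : bias w c0 (s + ((len - 1 : ℕ) : ZMod n)) ≤ bias w c0 (s + k)) :
    0 < bias w (traj w c0 pr T) (s + k) := by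
  have he : ∀ i ≤ len - 1, s + ((len - 1 : ℕ) : ZMod n) + -1 * ((i : ℤ) : ZMod n)
      = s + ((len - 1 - i : ℕ) : ZMod n) := fun i hi => by
    rw [Nat.cast_sub hi]
    push_cast
    ring
  have hF : ∀ q ∈ arc (s + ((len - 1 : ℕ) : ZMod n)) (-1) (Icc 0 (2 * (w : ℤ))),
      q ∈ block s len := by
    intro q hq
    obtain ⟨j, hj, rfl⟩ := mem_image.1 hq
    obtain ⟨i, rfl⟩ := Int.eq_ofNat_of_zero_le (mem_Icc.1 hj).1
    simp only [mem_Icc] at hj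
    exact ⟨len - 1 - i, by omega, he i (by omega)⟩
  have hnode := he (len - 1 - k) (by omega)
  rw [Nat.sub_sub_self (by omega)] at hnode
  rw [rightCombatants_eq_arc (by omega)] at hl
  rw [← hnode] at hmin ⊢
  exact bias_traj_pos_of_arc hn (Or.inr rfl) hF hinv hT hl hsum (by omega) (by omega) hmin

theorem bias_traj_pos_interior (hn : 2 * w < n)
    (hinv : ∀ v < T, ∀ q ∈ block s len, 0 < bias w (traj w c0 pr v) q) {k : ℕ}
    (hk : w ≤ k) (hk' : k + w < len) (h0 : 0 < bias w c0 (s + k)) :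
    0 < bias w (traj w c0 pr T) (s + k) := by
  refine bias_traj_pos_of_window_subset hn hinv (fun q hq => ?_) h0
  have hwin := window_add_mul (w := w) (Or.inl rfl) s k
  simp only [one_mul, Int.cast_natCast] at hwin
  rw [hwin] at hq
  obtain ⟨j, hj, rfl⟩ := mem_image.1 hq
  simp only [mem_Icc] at hj
  obtain ⟨i, rfl⟩ := Int.eq_ofNat_of_zero_le (by omega : (0 : ℤ) ≤ j)
  exact ⟨i, by omega, by simp⟩

theorem bias_traj_pos_of_isIncubator [NeZero n] (hn : 2 * w < n)
    (hinc : IsIncubator w c0 s len) {lL lR : List (ZMod n)}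
    (hL : IsPseudoTranscript w c0 pr t0 (leftCombatants w c0 s) lL)
    (hR : IsPseudoTranscript w c0 pr t0 (rightCombatants w c0 s len) lR)
    (hLsum : NonnegPartialSums c0 lL) (hRsum : NonnegPartialSums c0 lR) :
    ∀ T ≤ t0, ∀ k < len, 0 < bias w (traj w c0 pr T) (s + k) := by
  obtain ⟨hlen, hpos, hminL, hminR⟩ := hinc
  intro T
  induction T using Nat.strong_induction_on with
  | _ T ih =>
  intro hT k hk
  have hinv : ∀ v < T, ∀ q ∈ block s len, 0 < bias w (traj w c0 pr v) q := by
    rintro v hv _ ⟨j, hj, rfl⟩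
    exact ih v hv (by omega) j hj
  rcases (by omega : k ≤ w ∨ len ≤ k + w + 1 ∨ (w ≤ k ∧ k + w < len))
    with hkL | hkR | hkI
  · exact bias_traj_pos_left hn (by omega) hinv hT hL hLsum hkL (hminL k (by omega))
  · have hmin := hminR (len - 1 - k) (by omega)
    rw [Nat.sub_sub_self (by omega)] at hmin
    exact bias_traj_pos_right hn (by omega) hinv hT hR hRsum hkR hk hmin
  · exact bias_traj_pos_interior hn hinv hkI.1 hkI.2
      (Int.cast_pos.1 ((Real.sqrt_nonneg _).trans_lt (hpos k hk)))

end Incubator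

theorem firewall_forms_general (w n : ℕ) (hn : 2 * w < n) [NeZero n]
    (c0 : Config n) (pr : ℕ → ZMod n × ZMod n)
    (s : ZMod n) (len : ℕ) (hinc : IsIncubator w c0 s len)
    (t0 : ℕ) (ht0 : ∀ k < len, ¬ Impatient w c0 pr (s + (k : ZMod n)) t0)
    (lL lR : List (ZMod n))
    (hL : IsPseudoTranscript w c0 pr t0 (leftCombatants w c0 s) lL)
    (hR : IsPseudoTranscript w c0 pr t0 (rightCombatants w c0 s len) lR)
    (hLsum : NonnegPartialSums c0 lL) (hRsum : NonnegPartialSums c0 lR) :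
    ∃ t : ℕ, ∀ t', t ≤ t' → ∀ k < len, traj w c0 pr t' (s + (k : ZMod n)) = true := by
  have hbias := bias_traj_pos_of_isIncubator hn hinc hL hR hLsum hRsum
  have hx : ∀ k < len, traj w c0 pr t0 (s + k) = true := fun k hk =>
    traj_apply_eq_true_of_not_impatient (fun v hv => hbias v hv k hk) (ht0 k hk)
  exact ⟨t0, fun t ht => traj_apply_eq_of_forall_eq (by linarith [hinc.1]) hx ht⟩

/-- If `F` (the block of length `len` starting at `s`) is an
x-firewall incubator in the initial configuration, `t0` is a time at which no node of
`F` is impatient, and there are a left- and a right-pseudo-transcript of `F` all of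
whose partial sums are nonnegative, then `F` becomes an x-firewall: from some time on,
every node of `F` carries (and keeps) the label `x`. -/
theorem firewall_forms (w n : ℕ) (hw : 1 ≤ w) (hn : 2 * w < n) [NeZero n]
    (c0 : Config n) (pr : ℕ → ZMod n × ZMod n)
    (s : ZMod n) (len : ℕ) (hinc : IsIncubator w c0 s len)
    (t0 : ℕ) (ht0 : ∀ k < len, ¬ Impatient w c0 pr (s + (k : ZMod n)) t0)
    (lL lR : List (ZMod n))
    (hL : IsPseudoTranscript w c0 pr t0 (leftCombatants w c0 s) lL)
    (hR : IsPseudoTranscript w c0 pr t0 (rightCombatants w c0 s len) lR)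
    (hLsum : NonnegPartialSums c0 lL) (hRsum : NonnegPartialSums c0 lR) :
    ∃ t : ℕ, ∀ t', t ≤ t' → ∀ k < len, traj w c0 pr t' (s + (k : ZMod n)) = true :=
  firewall_forms_general w n hn c0 pr s len hinc t0 ht0 lL lR hL hR hLsum hRsum

end Schelling
end

section
/- In the coupling of the segregation processes on the ring C_n and on the disjoint-cycles graph G, the expected number of tainted nodes at any time t ≥ 0 satisfies E[|D(t)|] ≤ e^{12wt/n} · ((2w−1)/L) · n, and moreover the probability that |D(t)|/n > 2·e^{12wt/n}·(2w−1)/L is at most exp(−wn/(36L²)). -/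
/-!
A proposal can enlarge the tainted set only if one of its two nodes is already tainted, which
happens with probability at most `2|D|/n`, and it then adds at most `2w + 1` nodes around each
proposed node, because away from the initially tainted block boundaries the cycles of `G` look
like `C_n`. Hence `E[|D(t+1)| | D(t)] ≤ (1 + 12w/n) |D(t)|`, which iterates to the bound on the
mean. In the same way `exp (θₖ |D(k)|)` is a supermartingale for the decreasing schedule
`θₖ = θ e^{-κk/n}`, `κ = 12w(1 + 6wθ)`, and the Chernoff bound with `θ = 1/(36w(x + 1))`,
`x = 12wt/n`, gives the tail estimate.
-/

open MeasureTheory ProbabilityTheory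
open scoped ENNReal NNReal

namespace Schelling

open Finset

variable {n : ℕ}

section Dynamics

variable (w L : ℕ)

def initTainted : Set (ZMod n) := {i | i.val % L < w ∨ L - w < i.val % L}

open Classical in
noncomputable def taintStep (D : Set (ZMod n)) (a : ZMod n × ZMod n) : Set (ZMod n) :=
  if a.1 ∈ D ∨ a.2 ∈ D then D ∪ nbhd w L a.1 ∪ nbhd w L a.2 else D

noncomputable def taintedOf {t : ℕ} (v : Fin t → ZMod n × ZMod n) : Set (ZMod n) :=
  Fin.foldl t (fun D u => taintStep w L D (v u)) (initTainted w L)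

lemma tainted_eq_taintedOf (pr : ℕ → ZMod n × ZMod n) (t : ℕ) :
    tainted w L pr t = taintedOf w L (fun u : Fin t => pr u) := by
  unfold taintedOf
  induction t with
  | zero => rfl
  | succ t ih =>
    rw [Fin.foldl_succ_last]
    simp only [Fin.val_castSucc, Fin.val_last, ← ih]
    rfl

lemma subset_taintStep (D : Set (ZMod n)) (a : ZMod n × ZMod n) : D ⊆ taintStep w L D a := by
  unfold taintStep
  split_ifs
  exacts [Set.subset_union_left.trans Set.subset_union_left, subset_rfl]

end Dynamics

section RingWindow

def ringWindow (w : ℕ) (i : ZMod n) : Finset (ZMod n) :=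
  (Finset.range (2 * w + 1)).image fun k : ℕ => i - w + k

lemma card_ringWindow_le (w : ℕ) (i : ZMod n) : #(ringWindow w i) ≤ 2 * w + 1 :=
  Finset.card_image_le.trans (Finset.card_range _).le

variable {w : ℕ} {i : ZMod n} {k : ℕ}

lemma add_mem_ringWindow (hk : k ≤ w) : i + k ∈ ringWindow w i :=
  Finset.mem_image.2 ⟨w + k, Finset.mem_range.2 (by omega), by push_cast; ring⟩

lemma sub_mem_ringWindow (hk : k ≤ w) : i - k ∈ ringWindow w i :=
  Finset.mem_image.2 ⟨w - k, Finset.mem_range.2 (by omega), by push_cast [Nat.cast_sub hk]; ring⟩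

end RingWindow

section RingArithmetic

variable [NeZero n] {w L : ℕ}

lemma two_le_of_dvd (hL : 2 ≤ L) (hdvd : L ∣ n) : 2 ≤ n :=
  hL.trans (Nat.le_of_dvd (NeZero.pos n) hdvd)

lemma val_add_natCast_mod (hdvd : L ∣ n) (i : ZMod n) (k : ℕ) :
    (i + k).val % L = (i.val % L + k) % L := by
  have : i + (k : ZMod n) = ((i.val + k : ℕ) : ZMod n) := by
    push_cast [ZMod.natCast_zmod_val]; rfl
  rw [this, ZMod.val_natCast, Nat.mod_mod_of_dvd _ hdvd, Nat.mod_add_mod]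

omit [NeZero n] in
lemma val_gnbr_mod (hdvd : L ∣ n) (i : ZMod n) (k : ℕ) :
    (gnbr L i k).val % L = (i.val % L + k) % L := by
  rw [gnbr, ZMod.val_natCast, Nat.mod_mod_of_dvd _ hdvd, Nat.mul_add_mod', Nat.mod_mod]

lemma gnbr_eq_add (i : ZMod n) {k : ℕ} (hk : i.val % L + k < L) : gnbr L i k = i + k := by
  rw [gnbr, Nat.mod_eq_of_lt hk, ← add_assoc, Nat.div_add_mod', Nat.cast_add,
    ZMod.natCast_zmod_val]

lemma gnbr_sub_eq_sub (hL : 0 < L) (i : ZMod n) {k : ℕ} (hk : k ≤ i.val % L) :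
    gnbr L i (L - k) = i - k := by
  have hlt : i.val % L < L := Nat.mod_lt _ hL
  have hmod : (i.val % L + (L - k)) % L = i.val % L - k := by
    rw [show i.val % L + (L - k) = i.val % L - k + L by omega, Nat.add_mod_right,
      Nat.mod_eq_of_lt (by omega)]
  have hval : i.val / L * L + (i.val % L - k) = i.val - k := by
    have := Nat.div_add_mod' i.val L; omega
  rw [gnbr, hmod, hval, Nat.cast_sub (hk.trans (Nat.mod_le _ _)), ZMod.natCast_zmod_val]

/-- Every node within `w` steps of `i` in `G` but not in `C_n` is initially tainted, except
for one node when `i` is the first node of its cycle. -/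
lemma mem_nbhd_cases (hL : 2 * w < L) (hdvd : L ∣ n) {i j : ZMod n} (hj : j ∈ nbhd w L i) :
    j ∈ initTainted w L ∨ (∃ k ≤ w, j = i + k ∨ j = i - k) ∨
      (i.val % L = 0 ∧ j = gnbr L i (L - w)) := by
  obtain ⟨k, hk, hj | hj | hj | hj⟩ := hj
  · exact Or.inr (Or.inl ⟨k, hk, Or.inl hj⟩)
  · exact Or.inr (Or.inl ⟨k, hk, Or.inr hj⟩)
  · have hlt : i.val % L < L := Nat.mod_lt _ (by omega)
    by_cases hk' : i.val % L + k < L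
    · exact Or.inr (Or.inl ⟨k, hk, Or.inl (hj.trans (gnbr_eq_add i hk'))⟩)
    · refine Or.inl (Or.inl ?_)
      rw [hj, val_gnbr_mod hdvd, Nat.mod_eq_sub_mod (by omega), Nat.mod_eq_of_lt (by omega)]
      omega
  · have hlt : i.val % L < L := Nat.mod_lt _ (by omega)
    by_cases hk' : k ≤ i.val % L
    · exact Or.inr (Or.inl ⟨k, hk, Or.inr (hj.trans (gnbr_sub_eq_sub (by omega) i hk'))⟩)
    · have hres : j.val % L = i.val % L + (L - k) := by
        rw [hj, val_gnbr_mod hdvd, Nat.mod_eq_of_lt (by omega)]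
      by_cases hedge : k = w ∧ i.val % L = 0
      · exact Or.inr (Or.inr ⟨hedge.2, hedge.1 ▸ hj⟩)
      · exact Or.inl (Or.inr (by omega))

lemma add_mem_initTainted (hL : w < L) (hdvd : L ∣ n) {i : ZMod n} (hi : i.val % L = 0)
    {k : ℕ} (hk : k < w) : i + k ∈ initTainted w L := by
  left
  rw [val_add_natCast_mod hdvd, hi, zero_add, Nat.mod_eq_of_lt (by omega)]
  exact hk

lemma sub_mem_initTainted (hL : w < L) (hdvd : L ∣ n) {i : ZMod n} (hi : i.val % L = 0)
    {k : ℕ} (hk : k < w) : i - k ∈ initTainted w L := by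
  have hsum : ((i - k).val % L + k) % L = 0 := by
    rw [← val_add_natCast_mod hdvd, sub_add_cancel, hi]
  have hlt : (i - k).val % L < L := Nat.mod_lt _ (by omega)
  by_cases hk0 : k = 0
  · subst hk0
    left
    rw [Nat.cast_zero, sub_zero, hi]
    exact hk
  · right
    by_cases hsmall : (i - k).val % L + k < L
    · rw [Nat.mod_eq_of_lt hsmall] at hsum
      omega
    · rw [Nat.mod_eq_sub_mod (by omega), Nat.mod_eq_of_lt (by omega)] at hsum
      omega

lemma ncard_nbhd_diff_le (hw : 1 ≤ w) (hL : 2 * w < L) (hdvd : L ∣ n) {D : Set (ZMod n)}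
    (hD : initTainted w L ⊆ D) (i : ZMod n) : (nbhd w L i \ D).ncard ≤ 2 * w + 1 := by
  by_cases hi : i.val % L = 0
  · have hsub : nbhd w L i \ D ⊆ ↑({i + w, i - w, gnbr L i (L - w)} : Finset (ZMod n)) := by
      push_cast
      rintro j ⟨hj, hjD⟩
      rcases mem_nbhd_cases hL hdvd hj with hj0 | ⟨k, hk, hjk | hjk⟩ | ⟨-, hjg⟩
      · exact absurd (hD hj0) hjD
      · obtain rfl | hkw := eq_or_lt_of_le hk
        · exact Or.inl hjk
        · exact absurd (hD (hjk ▸ add_mem_initTainted (by omega) hdvd hi hkw)) hjD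
      · obtain rfl | hkw := eq_or_lt_of_le hk
        · exact Or.inr (Or.inl hjk)
        · exact absurd (hD (hjk ▸ sub_mem_initTainted (by omega) hdvd hi hkw)) hjD
      · exact Or.inr (Or.inr hjg)
    calc (nbhd w L i \ D).ncard ≤ #{i + w, i - w, gnbr L i (L - w)} := by
          rw [← Set.ncard_coe_finset]; exact Set.ncard_le_ncard hsub
      _ ≤ 3 := Finset.card_le_three
      _ ≤ 2 * w + 1 := by omega
  · have hsub : nbhd w L i \ D ⊆ ringWindow w i := by
      rintro j ⟨hj, hjD⟩
      rcases mem_nbhd_cases hL hdvd hj with hj0 | ⟨k, hk, rfl | rfl⟩ | ⟨hi0, -⟩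
      · exact absurd (hD hj0) hjD
      · exact add_mem_ringWindow hk
      · exact sub_mem_ringWindow hk
      · exact absurd hi0 hi
    calc (nbhd w L i \ D).ncard ≤ (ringWindow w i : Set (ZMod n)).ncard :=
          Set.ncard_le_ncard hsub
      _ ≤ 2 * w + 1 := by rw [Set.ncard_coe_finset]; exact card_ringWindow_le w i

lemma ncard_initTainted_le (hw : 1 ≤ w) (hL : 2 * w < L) (hdvd : L ∣ n) :
    ((initTainted w L : Set (ZMod n)).ncard : ℝ) ≤ (2 * w - 1) / L * n := by
  have hL0 : 0 < L := by omega
  let R : Finset ℕ := range w ∪ Ioo (L - w) L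
  have hR : #R ≤ 2 * w - 1 :=
    (card_union_le _ _).trans (by rw [card_range, Nat.card_Ioo]; omega)
  have hcount : (initTainted w L : Set (ZMod n)).ncard ≤ (2 * w - 1) * (n / L) := by
    calc (initTainted w L : Set (ZMod n)).ncard
        ≤ (↑(range (n / L) ×ˢ R) : Set (ℕ × ℕ)).ncard := by
          refine Set.ncard_le_ncard_of_injOn (fun i => (i.val / L, i.val % L)) ?_ ?_
          · intro i hi
            simp only [coe_product, Set.mem_prod, mem_coe, mem_range, mem_union, mem_Ioo, R]
            refine ⟨(Nat.div_lt_iff_lt_mul hL0).2 ?_, ?_⟩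
            · rw [Nat.div_mul_cancel hdvd]; exact ZMod.val_lt i
            · have := Nat.mod_lt i.val hL0
              rcases hi with hi | hi <;> [left; right] <;> omega
          · intro i _ j _ hij
            simp only [Prod.mk.injEq] at hij
            apply ZMod.val_injective n
            rw [← Nat.div_add_mod' i.val L, ← Nat.div_add_mod' j.val L, hij.1, hij.2]
      _ = #R * (n / L) := by rw [Set.ncard_coe_finset, card_product, card_range, mul_comm]
      _ ≤ (2 * w - 1) * (n / L) := Nat.mul_le_mul_right _ hR
  calc ((initTainted w L : Set (ZMod n)).ncard : ℝ) ≤ ((2 * w - 1) * (n / L) : ℕ) := by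
        exact_mod_cast hcount
    _ = (2 * w - 1) / L * n := by
        rw [Nat.cast_mul, Nat.cast_sub (by omega), Nat.cast_div hdvd (by positivity)]
        push_cast
        ring

end RingArithmetic

section Growth

variable {w L : ℕ}

lemma taintStep_of_not_mem {D : Set (ZMod n)} {a : ZMod n × ZMod n}
    (h : ¬(a.1 ∈ D ∨ a.2 ∈ D)) : taintStep w L D a = D :=
  if_neg h

variable [NeZero n]

lemma ncard_taintStep_le (hw : 1 ≤ w) (hL : 2 * w < L) (hdvd : L ∣ n) {D : Set (ZMod n)}
    (hD : initTainted w L ⊆ D) (a : ZMod n × ZMod n) :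
    (taintStep w L D a).ncard ≤ D.ncard + (4 * w + 2) := by
  unfold taintStep
  split_ifs
  · have h₁ := ncard_nbhd_diff_le hw hL hdvd hD a.1
    have h₂ := ncard_nbhd_diff_le hw hL hdvd hD a.2
    calc (D ∪ nbhd w L a.1 ∪ nbhd w L a.2).ncard
        = (D ∪ (nbhd w L a.1 \ D) ∪ (nbhd w L a.2 \ D)).ncard := by
          congr 1; ext; simp only [Set.mem_union, Set.mem_sdiff]; tauto
      _ ≤ D.ncard + (nbhd w L a.1 \ D).ncard + (nbhd w L a.2 \ D).ncard :=
          (Set.ncard_union_le _ _).trans (Nat.add_le_add_right (Set.ncard_union_le _ _) _)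
      _ ≤ D.ncard + (4 * w + 2) := by omega
  · omega

end Growth

section Uniform

variable {α : Type*} [MeasurableSpace α]

lemma isProbabilityMeasure_uniformOn {s : Finset α} (hs : s.Nonempty) :
    IsProbabilityMeasure (uniformOn s) := by
  constructor
  simp [uniformOn, ENNReal.inv_mul_cancel, hs.ne_empty]

lemma integral_uniformOn [MeasurableSingletonClass α] (s : Finset α) (f : α → ℝ) :
    ∫ x, f x ∂uniformOn s = (#s : ℝ)⁻¹ * ∑ x ∈ s, f x := by
  rw [uniformOn, integral_smul_measure,
    integral_finsetSum_measure fun a _ => integrable_dirac (by simp)]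
  simp

end Uniform

section Proposals

variable [NeZero n]

lemma card_distinctPairs_filter_fst (p : ZMod n → Prop) [DecidablePred p] :
    #{a ∈ distinctPairs n | p a.1} = #{x | p x} * (n - 1) := by
  rw [distinctPairs, filter_filter, card_filter, Fintype.sum_prod_type]
  have h (x : ZMod n) : ∑ y, (if x ≠ y ∧ p x then 1 else 0) = if p x then n - 1 else 0 := by
    split_ifs with hx
    · simp only [hx, and_true]
      rw [← card_filter, filter_ne, card_erase_of_mem (mem_univ _), card_univ, ZMod.card]
    · simp [hx]
  simp only [h, sum_ite, sum_const_zero, sum_const, smul_eq_mul, add_zero]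

lemma card_distinctPairs_filter_snd (p : ZMod n → Prop) [DecidablePred p] :
    #{a ∈ distinctPairs n | p a.2} = #{a ∈ distinctPairs n | p a.1} :=
  card_bij' (fun a _ => a.swap) (fun a _ => a.swap)
    (by simp +contextual [distinctPairs, eq_comm]) (by simp +contextual [distinctPairs, eq_comm])
    (by simp) (by simp)

lemma card_distinctPairs : #(distinctPairs n) = n * (n - 1) := by
  simpa using card_distinctPairs_filter_fst (n := n) fun _ => True

open Classical in
lemma card_distinctPairs_touching_le (D : Set (ZMod n)) :
    #{a ∈ distinctPairs n | a.1 ∈ D ∨ a.2 ∈ D} ≤ 2 * D.ncard * (n - 1) := by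
  have hD : #{x | x ∈ D} = D.ncard := by
    rw [Set.ncard_eq_toFinset_card', Set.filter_mem_univ_eq_toFinset]
  calc #{a ∈ distinctPairs n | a.1 ∈ D ∨ a.2 ∈ D}
      ≤ #{a ∈ distinctPairs n | a.1 ∈ D} + #{a ∈ distinctPairs n | a.2 ∈ D} := by
        rw [filter_or]; exact card_union_le _ _
    _ = 2 * D.ncard * (n - 1) := by
        rw [card_distinctPairs_filter_snd (· ∈ D), card_distinctPairs_filter_fst (· ∈ D), hD]; ring

lemma isProbabilityMeasure_pairMeasure (hn : 2 ≤ n) : IsProbabilityMeasure (pairMeasure n) :=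
  isProbabilityMeasure_uniformOn <| card_pos.1 <| by
    rw [card_distinctPairs]; exact Nat.mul_pos (by omega) (by omega)

lemma isProbabilityMeasure_configMeasure : IsProbabilityMeasure (configMeasure n) :=
  isProbabilityMeasure_uniformOn univ_nonempty

end Proposals

section OneStep

variable [NeZero n] {w L : ℕ}

lemma integral_comp_ncard_taintStep_le (hw : 1 ≤ w) (hL : 2 * w < L) (hdvd : L ∣ n)
    {D : Set (ZMod n)} (hD : initTainted w L ⊆ D) {φ : ℕ → ℝ} (hφ : Monotone φ) :
    ∫ a, φ (taintStep w L D a).ncard ∂pairMeasure n ≤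
      φ D.ncard + 2 * D.ncard / n * (φ (D.ncard + (4 * w + 2)) - φ D.ncard) := by
  classical
  have hn : 2 ≤ n := two_le_of_dvd (by omega) hdvd
  have hn1 : (1 : ℝ) < n := by exact_mod_cast hn
  have hn1' : (n : ℝ) - 1 ≠ 0 := by linarith
  set d := D.ncard
  set Δ := φ (d + (4 * w + 2)) - φ d
  have hΔ : 0 ≤ Δ := sub_nonneg.2 (hφ (Nat.le_add_right _ _))
  have hpt (a : ZMod n × ZMod n) :
      φ (taintStep w L D a).ncard ≤ φ d + if a.1 ∈ D ∨ a.2 ∈ D then Δ else 0 := by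
    split_ifs with h
    · have := hφ (ncard_taintStep_le hw hL hdvd hD a); linarith
    · rw [taintStep_of_not_mem h, add_zero]
  have hcard : (#(distinctPairs n) : ℝ) = n * (n - 1) := by
    rw [card_distinctPairs, Nat.cast_mul, Nat.cast_pred (by omega)]
  have htouch : (#{a ∈ distinctPairs n | a.1 ∈ D ∨ a.2 ∈ D} : ℝ) ≤ 2 * d * (n - 1) := by
    rw [← Nat.cast_pred (by omega)]
    exact_mod_cast card_distinctPairs_touching_le D
  rw [pairMeasure, integral_uniformOn, hcard]
  calc ((n : ℝ) * (n - 1))⁻¹ * ∑ a ∈ distinctPairs n, φ (taintStep w L D a).ncard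
      ≤ ((n : ℝ) * (n - 1))⁻¹ *
          ∑ a ∈ distinctPairs n, (φ d + if a.1 ∈ D ∨ a.2 ∈ D then Δ else 0) := by
        gcongr with a; exact hpt a
    _ = φ d + #{a ∈ distinctPairs n | a.1 ∈ D ∨ a.2 ∈ D} / (n * (n - 1)) * Δ := by
        rw [sum_add_distrib, sum_const, ← sum_filter, sum_const, nsmul_eq_mul, nsmul_eq_mul, hcard]
        field_simp
    _ ≤ φ d + 2 * d / n * Δ := by
        gcongr φ d + ?_ * Δ
        rw [div_le_div_iff₀ (by positivity) (by positivity)]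
        nlinarith

end OneStep

section Iteration

variable {α S : Type*} {step : S → α → S} {I : Set S}

lemma foldl_mem (hI : ∀ s ∈ I, ∀ a, step s a ∈ I) {s₀ : S} (hs₀ : s₀ ∈ I) :
    ∀ {t : ℕ} (v : Fin t → α), Fin.foldl t (fun s u => step s (v u)) s₀ ∈ I
  | 0, _ => by rwa [Fin.foldl_zero]
  | _ + 1, v => by rw [Fin.foldl_succ_last]; exact hI _ (foldl_mem hI hs₀ _) _

variable [MeasurableSpace α] [MeasurableSingletonClass α] [Finite α]
  {ν : Measure α} [IsProbabilityMeasure ν]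

lemma integral_foldl_le (hI : ∀ s ∈ I, ∀ a, step s a ∈ I) (Φ : ℕ → S → ℝ)
    (hΦ : ∀ k, ∀ s ∈ I, ∫ a, Φ (k + 1) (step s a) ∂ν ≤ Φ k s) {s₀ : S} (hs₀ : s₀ ∈ I)
    (t : ℕ) :
    ∫ v, Φ t (Fin.foldl t (fun s u => step s (v u)) s₀) ∂Measure.pi (fun _ : Fin t => ν) ≤
      Φ 0 s₀ := by
  induction t with
  | zero => simp
  | succ t ih =>
    have e := measurePreserving_piFinSuccAbove (fun _ : Fin (t + 1) => ν) (Fin.last t)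
    calc ∫ v, Φ (t + 1) (Fin.foldl (t + 1) (fun s u => step s (v u)) s₀) ∂Measure.pi (fun _ => ν)
        = ∫ p : α × (Fin t → α), Φ (t + 1) (step (Fin.foldl t (fun s u => step s (p.2 u)) s₀) p.1)
            ∂ν.prod (Measure.pi fun _ => ν) := by
          rw [← e.integral_comp']
          congr 1 with v
          rw [Fin.foldl_succ_last]
          simp [MeasurableEquiv.piFinSuccAbove_apply, Fin.insertNthEquiv, Fin.init]
      _ = ∫ v, ∫ a, Φ (t + 1) (step (Fin.foldl t (fun s u => step s (v u)) s₀) a) ∂ν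
            ∂Measure.pi (fun _ => ν) := integral_prod_symm _ Integrable.of_finite
      _ ≤ ∫ v, Φ t (Fin.foldl t (fun s u => step s (v u)) s₀) ∂Measure.pi (fun _ => ν) :=
          integral_mono Integrable.of_finite Integrable.of_finite
            fun v => hΦ t _ (foldl_mem hI hs₀ v)
      _ ≤ Φ 0 s₀ := ih

end Iteration

section Transfer

variable [NeZero n] {Ω : Type*} [MeasurableSpace Ω] {μ : Measure Ω} {init : Ω → Config n}
  {prop : ℕ → Ω → ZMod n × ZMod n}

lemma IsSchellingProcess.aemeasurable (hproc : IsSchellingProcess n μ init prop) (hn : 2 ≤ n)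
    (t : ℕ) : AEMeasurable (fun ω => (init ω, fun u : Fin t => prop u ω)) μ := by
  have := isProbabilityMeasure_pairMeasure hn
  have := isProbabilityMeasure_configMeasure (n := n)
  by_contra h
  exact IsProbabilityMeasure.ne_zero _ ((hproc t).symm.trans (Measure.map_of_not_aemeasurable h))

lemma IsSchellingProcess.aemeasurable_proposals (hproc : IsSchellingProcess n μ init prop)
    (hn : 2 ≤ n) (t : ℕ) : AEMeasurable (fun ω (u : Fin t) => prop u ω) μ :=
  measurable_snd.comp_aemeasurable (hproc.aemeasurable hn t)

lemma IsSchellingProcess.map_proposals (hproc : IsSchellingProcess n μ init prop)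
    (hn : 2 ≤ n) (t : ℕ) :
    μ.map (fun ω (u : Fin t) => prop u ω) = Measure.pi fun _ => pairMeasure n := by
  have := isProbabilityMeasure_configMeasure (n := n)
  rw [show (fun ω (u : Fin t) => prop u ω) = Prod.snd ∘ fun ω => (init ω, fun u : Fin t => prop u ω)
    from rfl, ← (measurable_snd.aemeasurable).map_map_of_aemeasurable (hproc.aemeasurable hn t),
    hproc t, Measure.map_snd_prod, measure_univ, one_smul]

lemma IsSchellingProcess.integral_comp_proposals (hproc : IsSchellingProcess n μ init prop)
    (hn : 2 ≤ n) {t : ℕ} (g : (Fin t → ZMod n × ZMod n) → ℝ) :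
    ∫ ω, g (fun u => prop u ω) ∂μ = ∫ v, g v ∂Measure.pi fun _ => pairMeasure n := by
  rw [← hproc.map_proposals hn,
    integral_map (hproc.aemeasurable_proposals hn t)
      Measurable.of_discrete.aestronglyMeasurable]

lemma IsSchellingProcess.measure_proposals_mem (hproc : IsSchellingProcess n μ init prop)
    (hn : 2 ≤ n) {t : ℕ} (A : Set (Fin t → ZMod n × ZMod n)) :
    μ {ω | (fun u : Fin t => prop u ω) ∈ A} = Measure.pi (fun _ => pairMeasure n) A := by
  rw [← hproc.map_proposals hn,
    Measure.map_apply_of_aemeasurable (hproc.aemeasurable_proposals hn t)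
      (MeasurableSet.of_discrete)]
  rfl

end Transfer

section Moments

variable [NeZero n] {w L : ℕ}

lemma integral_ncard_taintedOf_le (hw : 1 ≤ w) (hL : 2 * w < L) (hdvd : L ∣ n) (t : ℕ) :
    ∫ v, ((taintedOf w L v).ncard : ℝ) ∂Measure.pi (fun _ : Fin t => pairMeasure n) ≤
      (1 + 12 * w / n) ^ t * (initTainted w L : Set (ZMod n)).ncard := by
  have hn : 2 ≤ n := two_le_of_dvd (by omega) hdvd
  have := isProbabilityMeasure_pairMeasure hn
  set r : ℝ := 1 + 12 * w / n
  have hr : 0 < r := by positivity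
  have hstep (D : Set (ZMod n)) (hD : initTainted w L ⊆ D) :
      ∫ a, ((taintStep w L D a).ncard : ℝ) ∂pairMeasure n ≤ r * D.ncard := by
    refine (integral_comp_ncard_taintStep_le hw hL hdvd hD Nat.mono_cast).trans ?_
    have hw' : (8 * w + 4 : ℝ) ≤ 12 * w := by
      have : (1 : ℝ) ≤ w := by exact_mod_cast hw
      linarith
    push_cast
    calc (D.ncard : ℝ) + 2 * D.ncard / n * (D.ncard + (4 * w + 2) - D.ncard)
        = D.ncard + (8 * w + 4) * D.ncard / n := by ring
      _ ≤ D.ncard + 12 * w * D.ncard / n := by gcongr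
      _ = r * D.ncard := by ring
  have key := integral_foldl_le (ν := pairMeasure n) (step := taintStep w L)
    (I := {D | initTainted w L ⊆ D}) (fun D hD a => hD.trans (subset_taintStep w L D a))
    (fun k D => (D.ncard : ℝ) / r ^ k) (fun k D hD => ?_)
    (show initTainted w L ⊆ initTainted w L from subset_rfl) t
  · rw [integral_div, pow_zero, div_one, div_le_iff₀ (by positivity), mul_comm] at key
    exact key
  · rw [integral_div, div_le_div_iff₀ (by positivity) (by positivity), pow_succ]
    calc (∫ a, ((taintStep w L D a).ncard : ℝ) ∂pairMeasure n) * r ^ k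
        ≤ r * D.ncard * r ^ k := by gcongr; exact hstep D hD
      _ = D.ncard * (r ^ k * r) := by ring

lemma integral_exp_ncard_taintStep_le (hw : 1 ≤ w) (hL : 2 * w < L) (hdvd : L ∣ n)
    {D : Set (ZMod n)} (hD : initTainted w L ⊆ D) {θ θ' : ℝ} (hθ' : 0 ≤ θ') (hθ'θ : θ' ≤ θ)
    (hθ : θ * (4 * w + 2) ≤ 1) :
    ∫ a, Real.exp (θ' * (taintStep w L D a).ncard) ∂pairMeasure n ≤
      Real.exp (θ' * (1 + 12 * w * (1 + 6 * w * θ) / n) * D.ncard) := by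
  have hw' : (1 : ℝ) ≤ w := by exact_mod_cast hw
  set d : ℝ := (D.ncard : ℝ)
  set y := θ' * (4 * w + 2)
  have hy : 0 ≤ y := by positivity
  have hyθ : y ≤ θ * (4 * w + 2) := mul_le_mul_of_nonneg_right hθ'θ (by positivity)
  have hexp : Real.exp y - 1 ≤ y * (1 + θ * (4 * w + 2)) := by
    have := (abs_le.1 (Real.abs_exp_sub_one_sub_id_le (abs_le.2 ⟨by linarith, hyθ.trans hθ⟩))).2
    nlinarith
  have hcoef : 2 * (4 * w + 2) * (1 + θ * (4 * w + 2)) ≤ 12 * w * (1 + 6 * w * θ) := by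
    have hθ0 : 0 ≤ θ := hθ'.trans hθ'θ
    have h₁ : 2 * (4 * w + 2 : ℝ) ≤ 12 * w := by linarith
    have h₂ : 1 + θ * (4 * w + 2) ≤ 1 + 6 * w * θ := by nlinarith
    exact mul_le_mul h₁ h₂ (by positivity) (by positivity)
  have hmono : Monotone fun k : ℕ => Real.exp (θ' * k) := fun a b hab =>
    Real.exp_le_exp.2 (mul_le_mul_of_nonneg_left (Nat.cast_le.2 hab) hθ')
  calc ∫ a, Real.exp (θ' * (taintStep w L D a).ncard) ∂pairMeasure n
      ≤ Real.exp (θ' * d) + 2 * d / n *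
          (Real.exp (θ' * ((D.ncard + (4 * w + 2) : ℕ) : ℝ)) - Real.exp (θ' * d)) :=
        integral_comp_ncard_taintStep_le hw hL hdvd hD hmono
    _ = Real.exp (θ' * d) * (2 * d / n * (Real.exp y - 1) + 1) := by
        push_cast; rw [mul_add, Real.exp_add]; ring
    _ ≤ Real.exp (θ' * d) * Real.exp (2 * d / n * (Real.exp y - 1)) := by
        gcongr; exact Real.add_one_le_exp _
    _ ≤ Real.exp (θ' * d) * Real.exp (θ' * (12 * w * (1 + 6 * w * θ)) / n * d) := by
        gcongr Real.exp (θ' * d) * Real.exp ?_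
        calc 2 * d / n * (Real.exp y - 1) ≤ 2 * d / n * (y * (1 + θ * (4 * w + 2))) := by
              gcongr
          _ = θ' * (2 * (4 * w + 2) * (1 + θ * (4 * w + 2))) / n * d := by ring
          _ ≤ θ' * (12 * w * (1 + 6 * w * θ)) / n * d := by gcongr
    _ = Real.exp (θ' * (1 + 12 * w * (1 + 6 * w * θ) / n) * d) := by
        rw [← Real.exp_add]; ring_nf

lemma integral_exp_ncard_taintedOf_le (hw : 1 ≤ w) (hL : 2 * w < L) (hdvd : L ∣ n) {θ : ℝ}
    (hθ : 0 ≤ θ) (hθw : θ * (4 * w + 2) ≤ 1) (t : ℕ) :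
    ∫ v, Real.exp (θ * Real.exp (-(12 * w * (1 + 6 * w * θ) * t / n)) * (taintedOf w L v).ncard)
        ∂Measure.pi (fun _ : Fin t => pairMeasure n) ≤
      Real.exp (θ * (initTainted w L : Set (ZMod n)).ncard) := by
  have hn : 2 ≤ n := two_le_of_dvd (by omega) hdvd
  have := isProbabilityMeasure_pairMeasure hn
  set κ : ℝ := 12 * w * (1 + 6 * w * θ)
  have hκ : 0 ≤ κ := by positivity
  have key := integral_foldl_le (ν := pairMeasure n) (step := taintStep w L)
    (I := {D | initTainted w L ⊆ D}) (fun D hD a => hD.trans (subset_taintStep w L D a))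
    (fun k D => Real.exp (θ * Real.exp (-(κ * k / n)) * D.ncard)) (fun k D hD => ?_)
    (show initTainted w L ⊆ initTainted w L from subset_rfl) t
  · simp only [Nat.cast_zero, mul_zero, zero_div, neg_zero, Real.exp_zero, mul_one] at key
    exact key
  · set θk := θ * Real.exp (-(κ * (k + 1 : ℕ) / n))
    have hθk : θk ≤ θ :=
      mul_le_of_le_one_right hθ (Real.exp_le_one_iff.2 (neg_nonpos.2 (by positivity)))
    have hdecay : θk * (1 + κ / n) ≤ θ * Real.exp (-(κ * k / n)) :=
      calc θk * (1 + κ / n) ≤ θk * Real.exp (κ / n) := by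
            gcongr; linarith [Real.add_one_le_exp (κ / n)]
        _ = θ * Real.exp (-(κ * k / n)) := by
            rw [mul_assoc, ← Real.exp_add]; push_cast; ring_nf
    calc ∫ a, Real.exp (θk * (taintStep w L D a).ncard) ∂pairMeasure n
        ≤ Real.exp (θk * (1 + κ / n) * D.ncard) :=
          integral_exp_ncard_taintStep_le hw hL hdvd hD (by positivity) hθk hθw
      _ ≤ Real.exp (θ * Real.exp (-(κ * k / n)) * D.ncard) := by gcongr

lemma measure_ncard_taintedOf_ge_le (hw : 1 ≤ w) (hL : 2 * w < L) (hdvd : L ∣ n) {θ : ℝ}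
    (hθ : 0 ≤ θ) (hθw : θ * (4 * w + 2) ≤ 1) (t : ℕ) (a : ℝ) :
    Measure.pi (fun _ : Fin t => pairMeasure n) {v | a ≤ (taintedOf w L v).ncard} ≤
      ENNReal.ofReal (Real.exp (θ * (initTainted w L : Set (ZMod n)).ncard -
        θ * Real.exp (-(12 * w * (1 + 6 * w * θ) * t / n)) * a)) := by
  have hn : 2 ≤ n := two_le_of_dvd (by omega) hdvd
  have := isProbabilityMeasure_pairMeasure hn
  set θt := θ * Real.exp (-(12 * w * (1 + 6 * w * θ) * t / n))
  rw [← ofReal_measureReal]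
  refine ENNReal.ofReal_le_ofReal ?_
  calc (Measure.pi fun _ : Fin t => pairMeasure n).real {v | a ≤ (taintedOf w L v).ncard}
      ≤ Real.exp (-θt * a) *
          mgf (fun v => ((taintedOf w L v).ncard : ℝ)) (Measure.pi fun _ => pairMeasure n) θt :=
        measure_ge_le_exp_mul_mgf a (by positivity) Integrable.of_finite
    _ ≤ Real.exp (-θt * a) * Real.exp (θ * (initTainted w L : Set (ZMod n)).ncard) := by
        gcongr
        exact integral_exp_ncard_taintedOf_le hw hL hdvd hθ hθw t
    _ = _ := by rw [← Real.exp_add]; ring_nf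

end Moments

lemma tail_exponent_le {w L n x θ d₀ : ℝ} (hw : 1 ≤ w) (hL : 2 * w + 1 ≤ L) (hn : 0 ≤ n)
    (hx : 0 ≤ x) (hθ : θ * (36 * w * (x + 1)) = 1)
    (hsmall : 2 * Real.exp x * ((2 * w - 1) / L) < 1) (hd₀ : d₀ ≤ (2 * w - 1) / L * n) :
    θ * d₀ - θ * Real.exp (-(x * (1 + 6 * w * θ))) * (2 * Real.exp x * ((2 * w - 1) / L) * n) ≤
      -(w * n) / (36 * L ^ 2) := by
  have hL0 : 0 < L := by linarith
  have hw1 : 0 ≤ 2 * w - 1 := by linarith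
  set m := (2 * w - 1) / L * n with hm_def
  have hm : 0 ≤ m := by positivity
  have hθ0 : 0 < θ := by
    by_contra! h
    nlinarith [mul_nonneg (by linarith : (0 : ℝ) ≤ 36 * w) (by linarith : (0 : ℝ) ≤ x + 1)]
  have hshift : x * (1 + 6 * w * θ) ≤ x + 1 / 6 := by nlinarith
  have hgain : 5 / 6 ≤ Real.exp (-(x * (1 + 6 * w * θ))) * Real.exp x := by
    rw [← Real.exp_add]
    linarith [Real.add_one_le_exp (-(x * (1 + 6 * w * θ)) + x)]
  have hxL : 2 * (2 * w - 1) * (x + 1) ≤ L := by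
    rw [mul_div_assoc', div_lt_one hL0] at hsmall
    nlinarith [Real.add_one_le_exp x]
  have hrate : w * n / (36 * L ^ 2) ≤ 2 / 3 * (θ * m) := by
    have h₁ : w * (36 * w * (x + 1)) ≤ 24 * (2 * w - 1) * L := by nlinarith
    have h₂ : w ≤ 24 * θ * (2 * w - 1) * L := by nlinarith
    rw [div_le_iff₀ (by positivity), hm_def]
    field_simp
    nlinarith
  calc θ * d₀ - θ * Real.exp (-(x * (1 + 6 * w * θ))) * (2 * Real.exp x * ((2 * w - 1) / L) * n)
      = θ * d₀ - 2 * (θ * m) * (Real.exp (-(x * (1 + 6 * w * θ))) * Real.exp x) := by ring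
    _ ≤ θ * m - 2 * (θ * m) * (5 / 6) := by gcongr
    _ = -(2 / 3 * (θ * m)) := by ring
    _ ≤ -(w * n) / (36 * L ^ 2) := by rw [neg_div]; exact neg_le_neg hrate

section Coupling

variable [NeZero n] {w L : ℕ} {Ω : Type*} [MeasurableSpace Ω] {μ : Measure Ω}
  {init : Ω → Config n} {prop : ℕ → Ω → ZMod n × ZMod n}

lemma integral_ncard_tainted_le (hw : 1 ≤ w) (hL : 2 * w < L) (hdvd : L ∣ n)
    (hproc : IsSchellingProcess n μ init prop) (t : ℕ) :
    ∫ ω, ((tainted w L (fun u => prop u ω) t).ncard : ℝ) ∂μ ≤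
      Real.exp (12 * w * t / n) * ((2 * w - 1) / L) * n := by
  have hn : 2 ≤ n := two_le_of_dvd (by omega) hdvd
  simp_rw [tainted_eq_taintedOf]
  rw [hproc.integral_comp_proposals hn fun v => ((taintedOf w L v).ncard : ℝ)]
  calc ∫ v, ((taintedOf w L v).ncard : ℝ) ∂Measure.pi (fun _ : Fin t => pairMeasure n)
      ≤ (1 + 12 * w / n) ^ t * (initTainted w L : Set (ZMod n)).ncard :=
        integral_ncard_taintedOf_le hw hL hdvd t
    _ ≤ Real.exp (12 * w / n) ^ t * ((2 * w - 1) / L * n) := by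
        gcongr
        · linarith [Real.add_one_le_exp (12 * w / n : ℝ)]
        · exact ncard_initTainted_le hw hL hdvd
    _ = Real.exp (12 * w * t / n) * ((2 * w - 1) / L) * n := by
        rw [← Real.exp_nat_mul]; ring_nf

lemma measure_ncard_tainted_gt_le (hw : 1 ≤ w) (hL : 2 * w < L) (hdvd : L ∣ n)
    (hproc : IsSchellingProcess n μ init prop) (t : ℕ) :
    μ {ω | 2 * Real.exp (12 * w * t / n) * ((2 * w - 1) / L) <
        (tainted w L (fun u => prop u ω) t).ncard / n} ≤
      ENNReal.ofReal (Real.exp (-(w * n) / (36 * L ^ 2))) := by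
  have hn : 2 ≤ n := two_le_of_dvd (by omega) hdvd
  have hn0 : (0 : ℝ) < n := by positivity
  have hw' : (1 : ℝ) ≤ w := by exact_mod_cast hw
  set x : ℝ := 12 * w * t / n
  set c := 2 * Real.exp x * ((2 * w - 1) / L)
  obtain hc | hc := le_or_gt 1 c
  · have hempty : {ω | c < (tainted w L (fun u => prop u ω) t).ncard / n} = ∅ := by
      refine Set.eq_empty_of_forall_notMem fun ω hω => ?_
      have hle : ((tainted w L (fun u => prop u ω) t).ncard : ℝ) ≤ n := by
        exact_mod_cast (Set.ncard_le_card _).trans_eq (Nat.card_zmod n)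
      exact absurd (hc.trans_lt hω) (not_lt.2 ((div_le_one hn0).2 hle))
    rw [hempty, measure_empty]
    exact zero_le
  · have hx : 0 ≤ x := by positivity
    set θ : ℝ := 1 / (36 * w * (x + 1))
    have hθ : θ * (36 * w * (x + 1)) = 1 := one_div_mul_cancel (by positivity)
    have hθw : θ * (4 * w + 2) ≤ 1 := by
      rw [div_mul_eq_mul_div, one_mul, div_le_one (by positivity)]
      nlinarith
    calc μ {ω | c < (tainted w L (fun u => prop u ω) t).ncard / n}
        ≤ μ {ω | c * n ≤ (tainted w L (fun u => prop u ω) t).ncard} :=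
          measure_mono fun ω hω => ((lt_div_iff₀ hn0).1 hω).le
      _ = Measure.pi (fun _ : Fin t => pairMeasure n) {v | c * n ≤ (taintedOf w L v).ncard} := by
          simp_rw [tainted_eq_taintedOf]
          exact hproc.measure_proposals_mem hn {v | c * n ≤ (taintedOf w L v).ncard}
      _ ≤ ENNReal.ofReal (Real.exp (θ * (initTainted w L : Set (ZMod n)).ncard -
            θ * Real.exp (-(12 * w * (1 + 6 * w * θ) * t / n)) * (c * n))) :=
          measure_ncard_taintedOf_ge_le hw hL hdvd (by positivity) hθw t _
      _ ≤ ENNReal.ofReal (Real.exp (-(w * n) / (36 * L ^ 2))) := by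
          gcongr
          rw [show 12 * w * (1 + 6 * w * θ) * t / n = x * (1 + 6 * w * θ) by ring]
          exact tail_exponent_le hw' (by exact_mod_cast hL) hn0.le hx hθ hc
            (ncard_initTainted_le hw hL hdvd)

end Coupling

theorem tainted_bounds_general (w L : ℕ) (hw : 1 ≤ w) (hL : 2 * w < L)
    (n : ℕ) (hdvd : L ∣ n) [NeZero n]
    (Ω : Type) (mΩ : MeasurableSpace Ω) (μ : Measure Ω)
    (init : Ω → Config n) (prop : ℕ → Ω → ZMod n × ZMod n)
    (hproc : IsSchellingProcess n μ init prop) (t : ℕ) :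
    (∫ ω, ((tainted w L (fun u => prop u ω) t).ncard : ℝ) ∂μ
        ≤ Real.exp (12 * (w : ℝ) * (t : ℝ) / (n : ℝ)) * ((2 * (w : ℝ) - 1) / (L : ℝ)) * (n : ℝ)) ∧
    μ {ω | 2 * Real.exp (12 * (w : ℝ) * (t : ℝ) / (n : ℝ)) * ((2 * (w : ℝ) - 1) / (L : ℝ))
          < ((tainted w L (fun u => prop u ω) t).ncard : ℝ) / (n : ℝ)}
      ≤ ENNReal.ofReal (Real.exp (-((w : ℝ) * (n : ℝ)) / (36 * (L : ℝ) ^ 2))) :=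
  ⟨integral_ncard_tainted_le hw hL hdvd hproc t, measure_ncard_tainted_gt_le hw hL hdvd hproc t⟩

/-- In the coupling of the segregation processes on `C_n` and on the
disjoint-cycles graph `G`, the expected number of tainted nodes at time `t` is at most
`e^{12wt/n}·((2w - 1)/L)·n`, and the probability that `|D(t)|/n` exceeds
`2·e^{12wt/n}·(2w - 1)/L` is at most `exp(-wn/(36L²))`. -/
theorem tainted_bounds (w L : ℕ) (hw : 1 ≤ w) (hL : 2 * w < L)
    (n : ℕ) (hdvd : L ∣ n) (hn : 2 * w < n) [NeZero n]
    (Ω : Type) (mΩ : MeasurableSpace Ω) (μ : Measure Ω) (hμ : IsProbabilityMeasure μ)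
    (init : Ω → Config n) (prop : ℕ → Ω → ZMod n × ZMod n)
    (hproc : IsSchellingProcess n μ init prop) (t : ℕ) :
    (∫ ω, ((tainted w L (fun u => prop u ω) t).ncard : ℝ) ∂μ
        ≤ Real.exp (12 * (w : ℝ) * (t : ℝ) / (n : ℝ)) * ((2 * (w : ℝ) - 1) / (L : ℝ)) * (n : ℝ)) ∧
    μ {ω | 2 * Real.exp (12 * (w : ℝ) * (t : ℝ) / (n : ℝ)) * ((2 * (w : ℝ) - 1) / (L : ℝ))
          < ((tainted w L (fun u => prop u ω) t).ncard : ℝ) / (n : ℝ)}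
      ≤ ENNReal.ofReal (Real.exp (-((w : ℝ) * (n : ℝ)) / (36 * (L : ℝ) ^ 2))) :=
  tainted_bounds_general w L hw hL n hdvd Ω mΩ μ init prop hproc t

end Schelling
end
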